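/- arXiv:1305.5357 — 4 statements merged into one kernel-verified Lean document; each statement's English description precedes it below -/
import Mathlib

section
/- For all integers n ≥ 1 and 1 ≤ k ≤ n, the number of linked partitions of [n] with exactly k blocks equals the number of permutations of [n] with exactly k−1 descents. -/
/-- `P` is a linked partition of `[n] = {1,…,n}`: a collection of nonempty
subsets of `[n]` whose union is `[n]`, any two distinct blocks being nearly
disjoint. -/
def IsLinkedPartition (n : ℕ) (P : Finset (Finset ℕ)) : Prop :=
  (∀ B ∈ P, B.Nonempty ∧ B ⊆ Finset.Icc 1 n) ∧
  (∀ x ∈ Finset.Icc 1 n, ∃ B ∈ P, x ∈ B) ∧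
  (∀ B ∈ P, ∀ C ∈ P, B ≠ C → ∀ x ∈ B ∩ C,
    ((∀ y ∈ B, x ≤ y) ∧ 1 < B.card ∧ (∃ y ∈ C, y < x)) ∨
    ((∀ y ∈ C, x ≤ y) ∧ 1 < C.card ∧ (∃ y ∈ B, y < x)))

/-- In the linear representation there is an arc `(i, j)` iff `i < j` and some
block `B ∈ P` has minimum `i` and contains `j`. -/
def IsArc (P : Finset (Finset ℕ)) (i j : ℕ) : Prop :=
  i < j ∧ ∃ B ∈ P, i ∈ B ∧ j ∈ B ∧ ∀ y ∈ B, i ≤ y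

def IsLeftEndpoint (P : Finset (Finset ℕ)) (x : ℕ) : Prop := ∃ j, IsArc P x j

def IsRightEndpoint (P : Finset (Finset ℕ)) (x : ℕ) : Prop := ∃ i, IsArc P i x

/-- An origin is only a left-hand endpoint. -/
def IsOrigin (P : Finset (Finset ℕ)) (x : ℕ) : Prop :=
  IsLeftEndpoint P x ∧ ¬ IsRightEndpoint P x

/-- A transient is both a left-hand and a right-hand endpoint. -/
def IsTransient (P : Finset (Finset ℕ)) (x : ℕ) : Prop :=
  IsLeftEndpoint P x ∧ IsRightEndpoint P x

/-- A destination is only a right-hand endpoint. -/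
def IsDestination (P : Finset (Finset ℕ)) (x : ℕ) : Prop :=
  ¬ IsLeftEndpoint P x ∧ IsRightEndpoint P x

/-- A singleton is an isolated vertex of `[n]`. -/
def IsSingletonVertex (n : ℕ) (P : Finset (Finset ℕ)) (x : ℕ) : Prop :=
  x ∈ Finset.Icc 1 n ∧ ¬ IsLeftEndpoint P x ∧ ¬ IsRightEndpoint P x

/-- No two arcs cross: there are no arcs `(i₁,j₁)`, `(i₂,j₂)` with
`i₁ < i₂ < j₁ < j₂`. -/
def NoncrossingLP (P : Finset (Finset ℕ)) : Prop :=
  ¬ ∃ i₁ i₂ j₁ j₂ : ℕ, IsArc P i₁ j₁ ∧ IsArc P i₂ j₂ ∧ i₁ < i₂ ∧ i₂ < j₁ ∧ j₁ < j₂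

/-- No two arcs nest: there are no arcs `(i₁,j₁)`, `(i₂,j₂)` with
`i₁ < i₂ < j₂ < j₁`. -/
def NonnestingLP (P : Finset (Finset ℕ)) : Prop :=
  ¬ ∃ i₁ i₂ j₁ j₂ : ℕ, IsArc P i₁ j₁ ∧ IsArc P i₂ j₂ ∧ i₁ < i₂ ∧ i₂ < j₂ ∧ j₂ < j₁

/-- The set of descent positions of a permutation `π₁ ⋯ π_n` (0-indexed:
`i` is a descent iff `π (i+1) < π i`). -/
def descentSet {n : ℕ} (π : Equiv.Perm (Fin n)) : Set (Fin n) :=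
  {i | ∃ h : (i : ℕ) + 1 < n, π ⟨(i : ℕ) + 1, h⟩ < π i}

/-- A permutation tableau of length `n`, encoded via the boundary labeling by
`1,…,n` from the top-right corner to the bottom-left corner (label `m`
corresponds to `(⟨m-1, _⟩ : Fin n)`).  `isRow i = true` iff label `i` labels a
row (the label `1` always labels a row).  The cells of the Ferrers diagram are
exactly the pairs (row `i`, column `j`) with `i < j`; rows above have smaller
labels and columns to the left have larger labels.  `filling i j = true`
records that the cell in row `i` and column `j` exists and contains a `1`
(cells containing `0` and non-cells are `false`).  Every column contains at
least one `1`, and no cell containing a `0` has both a `1` above it in its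
column and a `1` to its left in its row. -/
structure PermTableau (n : ℕ) where
  isRow : Fin n → Bool
  filling : Fin n → Fin n → Bool
  first_row : ∀ h : 0 < n, isRow ⟨0, h⟩ = true
  filling_cells : ∀ i j : Fin n, filling i j = true →
    isRow i = true ∧ isRow j = false ∧ i < j
  col_has_one : ∀ j : Fin n, isRow j = false → ∃ i : Fin n, filling i j = true
  no_bad_zero : ∀ i j : Fin n, isRow i = true → isRow j = false → i < j →
    (∃ i' : Fin n, i' < i ∧ filling i' j = true) →
    (∃ j' : Fin n, j < j' ∧ filling i j' = true) →
    filling i j = true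

namespace PermTableau

variable {n : ℕ}

/-- The diagram has a cell in row `i` and column `j` iff `i < j`. -/
def IsCell (T : PermTableau n) (i j : Fin n) : Prop :=
  T.isRow i = true ∧ T.isRow j = false ∧ i < j

/-- The number of rows. -/
noncomputable def numRows (T : PermTableau n) : ℕ := {i : Fin n | T.isRow i = true}.ncard

/-- The number of columns. -/
noncomputable def numCols (T : PermTableau n) : ℕ := {j : Fin n | T.isRow j = false}.ncard

/-- The cell in row `i`, column `j` contains a topmost `1`: it contains a `1`
and no cell above it in column `j` contains a `1`. -/
def TopmostOne (T : PermTableau n) (i j : Fin n) : Prop :=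
  T.filling i j = true ∧ ∀ i' : Fin n, i' < i → T.filling i' j = false

/-- The cell in row `i`, column `j` contains a restricted `0`: it contains a
`0` and some cell above it in column `j` contains a `1`. -/
def RestrictedZero (T : PermTableau n) (i j : Fin n) : Prop :=
  T.IsCell i j ∧ T.filling i j = false ∧ ∃ i' : Fin n, i' < i ∧ T.filling i' j = true

/-- A rightmost restricted `0` is a restricted `0` that is rightmost (minimal
column label) among the restricted `0`'s in its row. -/
def RightmostRestrictedZero (T : PermTableau n) (i j : Fin n) : Prop :=
  T.RestrictedZero i j ∧ ∀ j' : Fin n, T.RestrictedZero i j' → j ≤ j'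

/-- A cell is dotted if it contains a topmost `1` or a rightmost restricted `0`. -/
def Dotted (T : PermTableau n) (i j : Fin n) : Prop :=
  T.TopmostOne i j ∨ T.RightmostRestrictedZero i j

/-- `T` avoids the pattern `J₂`. -/
def AvoidsJ2 (T : PermTableau n) : Prop :=
  ¬ ∃ i₁ i₂ j₁ j₂ : Fin n,
    T.isRow i₁ = true ∧ T.isRow i₂ = true ∧ T.isRow j₁ = false ∧ T.isRow j₂ = false ∧
    i₁ < i₂ ∧ i₂ < j₁ ∧ j₁ < j₂ ∧
    T.Dotted i₁ j₁ ∧ T.Dotted i₂ j₂ ∧ ¬ T.Dotted i₂ j₁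

/-- `T` avoids the pattern `I₂`. -/
def AvoidsI2 (T : PermTableau n) : Prop :=
  ¬ ∃ i₁ i₂ j₁ j₂ : Fin n,
    T.isRow i₁ = true ∧ T.isRow i₂ = true ∧ T.isRow j₁ = false ∧ T.isRow j₂ = false ∧
    i₁ < i₂ ∧ i₂ < j₁ ∧ j₁ < j₂ ∧
    T.Dotted i₁ j₂ ∧ T.Dotted i₂ j₁ ∧ ¬ T.Dotted i₂ j₂

end PermTableau

/-!
Both sides are counted through the codes `g` with `g j ≤ j` for `j < n`. A linked partition
`P` is encoded by sending each `c ∈ [n]` to the least element sharing a block with `c`. The block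
with minimum `m` is then `m` together with the elements sent to `m`, so the blocks correspond to
the values of the code, and the partition can be recovered from it.

Appending a value `v ≤ n` to a code adds `v + 1` to its set of values, and inserting the new
largest letter into a permutation of `[n]` at one of the `n + 1` gaps creates a new ascending run
except at the gaps right after a run end. Either way the statistic (number of blocks, number of
ascending runs `= descents + 1`) keeps its value `s` for exactly `s` of the `n + 1` choices and
otherwise grows by one: both obey the Eulerian recurrence, with the same initial value at `n = 0`.
-/

open Finset

theorem card_filter_eq_of_prodEquiv {A B : Type*} [Fintype A] [Fintype B] {m : ℕ}
    (e : A × Fin m ≃ B) (s : A → ℕ) (t : B → ℕ) (G : A → Finset (Fin m))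
    (hG : ∀ a, #(G a) = s a) (ht : ∀ a p, t (e (a, p)) = if p ∈ G a then s a else s a + 1)
    (d : ℕ) :
    #{b | t b = d} = d * #{a | s a = d} + (m + 1 - d) * #{a | s a + 1 = d} := by
  have fiber (a : A) : #{p | t (e (a, p)) = d} =
      d * (if s a = d then 1 else 0) + (m + 1 - d) * (if s a + 1 = d then 1 else 0) := by
    simp only [ht]
    by_cases h₁ : s a = d
    · subst h₁
      simp [hG]
    · by_cases h₂ : s a + 1 = d
      · subst h₂
        simp [filter_not, card_univ_sdiff, hG]
      · simp only [h₁, h₂, if_false, mul_zero, add_zero, card_eq_zero, filter_eq_empty_iff]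
        intro p
        split_ifs <;> omega
  calc #{b | t b = d} = #{x | t (e x) = d} := by
        rw [← Fintype.card_subtype, ← Fintype.card_subtype]
        exact Fintype.card_congr (e.subtypeEquiv fun _ => Iff.rfl).symm
    _ = ∑ a, #{p | t (e (a, p)) = d} := by
        simp only [card_filter, Fintype.sum_prod_type]
    _ = _ := by
        simp only [fiber, sum_add_distrib, ← mul_sum, sum_boole, Nat.cast_id]

theorem Fin.val_succAbove {n : ℕ} (p : Fin (n + 1)) (i : Fin n) :
    (p.succAbove i : ℕ) = if (i : ℕ) < p then (i : ℕ) else i + 1 := by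
  unfold Fin.succAbove
  split_ifs <;> simp_all [Fin.lt_def]

section Runs

variable {α : Type*} [LinearOrder α] {n : ℕ}

/-- The ends of the maximal ascending runs of `w`: its descents and its last position. -/
def runEnds (w : Fin n → α) : Finset (Fin n) :=
  {i | ∀ h : (i : ℕ) + 1 < n, w ⟨i + 1, h⟩ < w i}

theorem runEnds_insertNth (w : Fin n → α) {x : α} (hx : ∀ i, w i < x)
    (p : Fin (n + 1)) :
    runEnds (p.insertNth x w) =
      insert p (((runEnds w).filter (·.succ ≠ p)).map p.succAboveEmb) := by
  ext q
  rcases p.eq_self_or_eq_succAbove q with rfl | ⟨j, rfl⟩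
  · simp only [runEnds, mem_filter, mem_univ, true_and, mem_insert, true_or, iff_true,
      Fin.insertNth_apply_same]
    intro h
    obtain ⟨k, hk⟩ := (Fin.eq_self_or_eq_succAbove q ⟨q + 1, h⟩).resolve_left
      (fun h' => by simpa using congrArg Fin.val h')
    rw [hk, Fin.insertNth_apply_succAbove]
    exact hx k
  · simp only [runEnds, mem_filter, mem_univ, true_and, mem_insert, p.succAbove_ne j,
      false_or, mem_map, Fin.succAboveEmb_apply, p.succAbove_right_injective.eq_iff,
      exists_eq_right, Fin.insertNth_apply_succAbove]
    by_cases hjp : j.succ = p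
    · subst hjp
      simp only [ne_eq, not_true_eq_false, and_false, iff_false, not_forall, not_lt]
      refine ⟨by simp, ?_⟩
      rw [show (⟨_, _⟩ : Fin (n + 1)) = j.succ from Fin.ext (by simp), Fin.insertNth_apply_same]
      exact (hx j).le
    · have hjp' : (j : ℕ) + 1 ≠ p := fun h => hjp (Fin.ext h)
      have hlt : (p.succAbove j : ℕ) + 1 < n + 1 ↔ (j : ℕ) + 1 < n := by
        rw [Fin.val_succAbove]; have := p.is_le; split_ifs <;> omega
      have hval (h : (j : ℕ) + 1 < n) :
          (⟨p.succAbove j + 1, hlt.2 h⟩ : Fin (n + 1)) = p.succAbove ⟨j + 1, h⟩ := by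
        ext; simp only [Fin.val_succAbove]; split_ifs <;> omega
      simp only [hjp, ne_eq, not_false_eq_true, and_true]
      constructor
      · intro H h
        simpa only [hval h, Fin.insertNth_apply_succAbove] using H (hlt.2 h)
      · intro H h
        rw [hval (hlt.1 h), Fin.insertNth_apply_succAbove]
        exact H (hlt.1 h)

theorem card_runEnds_insertNth (w : Fin n → α) {x : α} (hx : ∀ i, w i < x)
    (p : Fin (n + 1)) :
    #(runEnds (p.insertNth x w)) =
      if p ∈ (runEnds w).map (Fin.succEmb n) then #(runEnds w) else #(runEnds w) + 1 := by
  rw [runEnds_insertNth w hx, card_insert_of_notMem (by simp [Fin.succAbove_ne]), card_map]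
  split_ifs with hp
  · obtain ⟨j, hj, rfl⟩ := mem_map.1 hp
    rw [show (runEnds w).filter (·.succ ≠ Fin.succEmb n j) = (runEnds w).erase j by
      ext; simp [and_comm], card_erase_add_one hj]
  · rw [filter_true_of_mem fun j hj => ?_]
    exact fun h => hp (mem_map.2 ⟨j, hj, h⟩)

end Runs

/-- Insert the new largest letter `n` at position `p` of the word `σ 0 ⋯ σ (n - 1)`. -/
def Equiv.Perm.insertMaxAt {n : ℕ} (σ : Equiv.Perm (Fin n)) (p : Fin (n + 1)) :
    Equiv.Perm (Fin (n + 1)) :=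
  (finSuccEquiv' p).trans ((Equiv.optionCongr σ).trans (finSuccEquiv' (Fin.last n)).symm)

theorem Equiv.Perm.coe_insertMaxAt {n : ℕ} (σ : Equiv.Perm (Fin n)) (p : Fin (n + 1)) :
    ⇑(σ.insertMaxAt p) = p.insertNth (Fin.last n) (Fin.castSucc ∘ σ) := by
  funext q
  rcases p.eq_self_or_eq_succAbove q with rfl | ⟨j, rfl⟩ <;> simp [insertMaxAt]

theorem Equiv.Perm.insertMaxAt_injective2 {n : ℕ} :
    Function.Injective2 (@Equiv.Perm.insertMaxAt n) := by
  intro σ σ' p p' h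
  rw [← DFunLike.coe_fn_eq, coe_insertMaxAt, coe_insertMaxAt] at h
  obtain rfl : p = p' := by
    by_contra hne
    obtain ⟨j, rfl⟩ := (p'.eq_self_or_eq_succAbove p).resolve_left hne
    have := congrFun h (p'.succAbove j)
    simp only [Fin.insertNth_apply_same, Fin.insertNth_apply_succAbove] at this
    exact (Fin.castSucc_lt_last _).ne' this
  refine ⟨Equiv.ext fun i => Fin.castSucc_injective _ ?_, rfl⟩
  exact congrFun (Fin.insertNth_injective2.right _ h) i

noncomputable def Equiv.Perm.insertMaxEquiv (n : ℕ) :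
    Equiv.Perm (Fin n) × Fin (n + 1) ≃ Equiv.Perm (Fin (n + 1)) :=
  Equiv.ofBijective (Function.uncurry insertMaxAt) <| by
    refine (Fintype.bijective_iff_injective_and_card _).2 ⟨insertMaxAt_injective2.uncurry, ?_⟩
    simp [Fintype.card_perm, Nat.factorial_succ, mul_comm]

theorem Equiv.Perm.card_runEnds_insertMaxAt {n : ℕ} (σ : Equiv.Perm (Fin n)) (p : Fin (n + 1)) :
    #(runEnds (σ.insertMaxAt p)) =
      if p ∈ (runEnds σ).map (Fin.succEmb n) then #(runEnds σ) else #(runEnds σ) + 1 := by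
  rw [coe_insertMaxAt,
    card_runEnds_insertNth (Fin.castSucc ∘ σ) (x := Fin.last n) (Fin.castSucc_lt_last <| σ ·)]
  rfl

theorem card_runEnds_eq_ncard_descentSet_add_one {n : ℕ} (π : Equiv.Perm (Fin (n + 1))) :
    #(runEnds π) = (descentSet π).ncard + 1 := by
  have h : descentSet π = ↑((runEnds π).erase (Fin.last n)) := by
    ext i
    simp only [descentSet, runEnds, Set.mem_ofPred_eq, coe_erase, coe_filter, mem_univ, true_and,
      Set.mem_sdiff, Set.mem_singleton_iff, Fin.ext_iff, Fin.val_last]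
    exact ⟨fun ⟨h, hlt⟩ => ⟨fun _ => hlt, by omega⟩, fun ⟨H, h⟩ => ⟨by omega, H (by omega)⟩⟩
  rw [h, Set.ncard_coe_finset, card_erase_add_one (by simp [runEnds])]

namespace LinkedPartition

/-- Inserting `c` keeps the infimum at most `c`, rather than the junk value `0`, when `c` lies
in no block. -/
noncomputable def linkMin (P : Finset (Finset ℕ)) (c : ℕ) : ℕ :=
  sInf (insert c {y | ∃ B ∈ P, c ∈ B ∧ y ∈ B})

section linkMin

variable {P : Finset (Finset ℕ)} {B : Finset ℕ} {c m y : ℕ}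

theorem linkMin_le_self (P : Finset (Finset ℕ)) (c : ℕ) : linkMin P c ≤ c :=
  Nat.sInf_le (Set.mem_insert c _)

theorem linkMin_le_of_mem (hB : B ∈ P) (hc : c ∈ B) (hy : y ∈ B) : linkMin P c ≤ y :=
  Nat.sInf_le (Set.mem_insert_of_mem c ⟨B, hB, hc, hy⟩)

theorem le_linkMin (hm : m ≤ c) (h : ∀ B ∈ P, c ∈ B → ∀ y ∈ B, m ≤ y) : m ≤ linkMin P c := by
  refine le_csInf ⟨c, Set.mem_insert c _⟩ ?_
  rintro y (rfl | ⟨B, hB, hc, hy⟩)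
  exacts [hm, h B hB hc y hy]

theorem exists_mem_linkMin_mem (hc : ∃ B ∈ P, c ∈ B) : ∃ B ∈ P, c ∈ B ∧ linkMin P c ∈ B := by
  rcases Nat.sInf_mem (s := insert c {y | ∃ B ∈ P, c ∈ B ∧ y ∈ B}) ⟨c, Set.mem_insert c _⟩
    with h | h
  · obtain ⟨B, hB, hcB⟩ := hc
    exact ⟨B, hB, hcB, (congrArg (· ∈ B) h).mpr hcB⟩
  · exact h

end linkMin

section IsLinkedPartition

variable {n : ℕ} {P : Finset (Finset ℕ)} {B : Finset ℕ} {c m : ℕ}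

theorem one_le_linkMin (hP : IsLinkedPartition n P) (hc : c ∈ Icc 1 n) : 1 ≤ linkMin P c := by
  obtain ⟨B, hB, -, hmB⟩ := exists_mem_linkMin_mem (hP.2.1 c hc)
  exact (mem_Icc.1 ((hP.1 B hB).2 hmB)).1

theorem eq_insert_filter_linkMin (hP : IsLinkedPartition n P) (hB : B ∈ P)
    (hm : IsLeast (B : Set ℕ) m) : B = insert m ((Icc 1 n).filter (linkMin P · = m)) := by
  ext c
  simp only [mem_insert, mem_filter]
  constructor
  · intro hc
    refine or_iff_not_imp_left.2 fun hcm => ⟨(hP.1 B hB).2 hc, ?_⟩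
    refine le_antisymm (linkMin_le_of_mem hB hc hm.1) (le_linkMin (hm.2 hc) ?_)
    intro B' hB' hcB' y hy
    by_cases hBB' : B = B'
    · exact hm.2 (hBB' ▸ hy)
    rcases hP.2.2 B hB B' hB' hBB' c (mem_inter.2 ⟨hc, hcB'⟩) with ⟨hmin, -⟩ | ⟨hmin, -⟩
    · exact absurd (le_antisymm (hmin m hm.1) (hm.2 hc)) hcm
    · exact (hm.2 hc).trans (hmin y hy)
  · rintro (rfl | ⟨hc, hcm⟩)
    · exact hm.1
    obtain ⟨B', hB', hcB', hmB'⟩ := exists_mem_linkMin_mem (hP.2.1 c hc)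
    rw [hcm] at hmB'
    by_contra hcB
    have hBB' : B ≠ B' := by rintro rfl; exact hcB hcB'
    rcases hP.2.2 B hB B' hB' hBB' m (mem_inter.2 ⟨hm.1, hmB'⟩) with
      ⟨-, -, y, hy, hym⟩ | ⟨-, -, y, hy, hym⟩
    · exact (linkMin_le_of_mem hB' hcB' hy).not_gt (hcm ▸ hym)
    · exact (hm.2 hy).not_gt hym

theorem mem_image_linkMin (hP : IsLinkedPartition n P) :
    m ∈ (Icc 1 n).image (linkMin P) ↔ ∃ B ∈ P, IsLeast (B : Set ℕ) m := by
  rw [mem_image]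
  constructor
  · rintro ⟨c, hc, rfl⟩
    obtain ⟨B, hB, hcB, hmB⟩ := exists_mem_linkMin_mem (hP.2.1 c hc)
    exact ⟨B, hB, hmB, fun y hy => linkMin_le_of_mem hB hcB hy⟩
  rintro ⟨B, hB, hm⟩
  by_cases h : ∃ c ∈ B, c ≠ m
  · obtain ⟨c, hc, hcm⟩ := h
    have := eq_insert_filter_linkMin hP hB hm ▸ hc
    simp only [mem_insert, hcm, false_or, mem_filter] at this
    exact ⟨c, this⟩
  push Not at h
  refine ⟨m, (hP.1 B hB).2 hm.1, le_antisymm (linkMin_le_self P m) (le_linkMin le_rfl ?_)⟩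
  intro B' hB' hmB' y hy
  by_cases hBB' : B = B'
  · exact hm.2 (hBB' ▸ hy)
  rcases hP.2.2 B hB B' hB' hBB' m (mem_inter.2 ⟨hm.1, hmB'⟩) with
    ⟨-, hcard, -⟩ | ⟨-, -, y, hy, hym⟩
  · obtain ⟨a, ha, b, hb, hab⟩ := one_lt_card.1 hcard
    exact absurd ((h a ha).trans (h b hb).symm) hab
  · exact absurd (hm.2 hy) hym.not_ge

end IsLinkedPartition

/-- A code sends the element `j + 1` of `[n]` to `g j + 1 ≤ j + 1`, the element it is linked
down to (see `Code.parent`); `g j = j` means that `j + 1` is the minimum of every block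
containing it. -/
abbrev Code (n : ℕ) : Type := ∀ j : Fin n, Fin (j + 1)

namespace Code

variable {n : ℕ} (g : Code n)

def parent (c : ℕ) : ℕ :=
  if h : c ∈ Icc 1 n then g ⟨c - 1, by grind⟩ + 1 else c

def blockMins : Finset ℕ := (Icc 1 n).image g.parent

def block (i : ℕ) : Finset ℕ := insert i ((Icc 1 n).filter (g.parent · = i))

def toPartition : Finset (Finset ℕ) := g.blockMins.image g.block

variable {g}

theorem parent_le (c : ℕ) : g.parent c ≤ c := by
  unfold parent
  split_ifs with h
  · have := (g ⟨c - 1, by grind⟩).isLt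
    grind
  · rfl

theorem parent_mem_Icc {c : ℕ} (hc : c ∈ Icc 1 n) : g.parent c ∈ Icc 1 n := by
  have := g.parent_le c
  simp only [parent, dif_pos hc] at this ⊢
  grind

theorem blockMins_subset : g.blockMins ⊆ Icc 1 n := by
  simp only [blockMins, image_subset_iff]
  exact fun c hc => parent_mem_Icc hc

theorem mem_block {c i : ℕ} : c ∈ g.block i ↔ c = i ∨ c ∈ Icc 1 n ∧ g.parent c = i := by
  simp [block]

theorem le_of_mem_block {c i : ℕ} (h : c ∈ g.block i) : i ≤ c := by
  rcases mem_block.1 h with rfl | ⟨-, rfl⟩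
  exacts [le_rfl, parent_le c]

theorem mem_block_self (i : ℕ) : i ∈ g.block i := mem_insert_self _ _

theorem block_injective : Function.Injective g.block := fun i i' h =>
  le_antisymm (le_of_mem_block (g := g) (by rw [h]; exact mem_block_self i'))
    (le_of_mem_block (g := g) (by rw [← h]; exact mem_block_self i))

theorem card_toPartition : #g.toPartition = #g.blockMins :=
  card_image_of_injective _ block_injective

theorem mem_toPartition {B : Finset ℕ} : B ∈ g.toPartition ↔ ∃ i ∈ g.blockMins, g.block i = B :=
  mem_image

theorem block_parent_mem_toPartition {c : ℕ} (hc : c ∈ Icc 1 n) :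
    g.block (g.parent c) ∈ g.toPartition :=
  mem_image_of_mem _ (mem_image_of_mem _ hc)

theorem mem_block_parent {c : ℕ} (hc : c ∈ Icc 1 n) : c ∈ g.block (g.parent c) :=
  mem_block.2 (Or.inr ⟨hc, rfl⟩)

theorem one_lt_card_block {i : ℕ} (hi : i ∈ g.blockMins) (hpi : g.parent i ≠ i) :
    1 < #(g.block i) := by
  obtain ⟨c, hc, rfl⟩ := mem_image.1 hi
  exact one_lt_card.2
    ⟨_, mem_block_self _, c, mem_block_parent hc, fun h => hpi (by rw [h]; exact h)⟩

theorem isLinkedPartition_toPartition : IsLinkedPartition n g.toPartition := by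
  refine ⟨?_, fun c hc => ⟨_, block_parent_mem_toPartition hc, mem_block_parent hc⟩, ?_⟩
  · simp only [mem_toPartition]
    rintro _ ⟨i, hi, rfl⟩
    refine ⟨⟨i, mem_block_self i⟩, fun c hc => ?_⟩
    rcases mem_block.1 hc with rfl | ⟨hc, -⟩
    exacts [blockMins_subset hi, hc]
  have overlap : ∀ i ∈ g.blockMins, ∀ i', g.parent i = i' → i ≠ i' →
      (∀ y ∈ g.block i, i ≤ y) ∧ 1 < #(g.block i) ∧ ∃ y ∈ g.block i', y < i := by
    rintro i hi _ rfl hne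
    exact ⟨fun y => le_of_mem_block, one_lt_card_block hi hne.symm, _, mem_block_self _,
      lt_of_le_of_ne (parent_le i) hne.symm⟩
  simp only [mem_toPartition]
  rintro _ ⟨i, hi, rfl⟩ _ ⟨i', hi', rfl⟩ hne x hx
  have hii' : i ≠ i' := fun h => hne (h ▸ rfl)
  rw [mem_inter, mem_block, mem_block] at hx
  rcases hx with ⟨rfl | ⟨-, hpx⟩, rfl | ⟨-, hpx'⟩⟩
  · exact absurd rfl hii'
  · exact Or.inl (overlap x hi i' hpx' hii')
  · exact Or.inr (overlap x hi' i hpx hii'.symm)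
  · exact absurd (hpx.symm.trans hpx') hii'

theorem linkMin_toPartition {c : ℕ} (hc : c ∈ Icc 1 n) :
    linkMin g.toPartition c = g.parent c := by
  refine le_antisymm (linkMin_le_of_mem (block_parent_mem_toPartition hc) (mem_block_parent hc)
    (mem_block_self _)) (le_linkMin (parent_le c) ?_)
  simp only [mem_toPartition]
  rintro _ ⟨i, -, rfl⟩ hcB y hy
  refine le_trans ?_ (le_of_mem_block hy)
  rcases mem_block.1 hcB with rfl | ⟨-, rfl⟩
  exacts [parent_le _, le_rfl]

theorem parent_val_add_one (j : Fin n) : g.parent (j + 1) = g j + 1 := by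
  have hj : (j : ℕ) + 1 ∈ Icc 1 n := by grind
  simp only [parent, dif_pos hj]
  exact congrArg (fun i : Fin n => (g i : ℕ) + 1) (Fin.ext (Nat.add_sub_cancel _ _))

variable {P : Finset (Finset ℕ)}

noncomputable def ofPartition (n : ℕ) (P : Finset (Finset ℕ)) : Code n :=
  fun j => ⟨linkMin P (j + 1) - 1, by have := linkMin_le_self P (j + 1); omega⟩

theorem parent_ofPartition (hP : IsLinkedPartition n P) {c : ℕ} (hc : c ∈ Icc 1 n) :
    (ofPartition n P).parent c = linkMin P c := by
  have := one_le_linkMin hP hc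
  have hc' : c - 1 + 1 = c := by grind
  simp only [parent, dif_pos hc, ofPartition, Fin.val_mk]
  rw [hc']
  omega

theorem ofPartition_toPartition : ofPartition n g.toPartition = g := by
  funext j
  ext
  simp only [ofPartition, linkMin_toPartition (show (j : ℕ) + 1 ∈ Icc 1 n by grind),
    parent_val_add_one, Nat.add_sub_cancel]

theorem toPartition_ofPartition (hP : IsLinkedPartition n P) :
    (ofPartition n P).toPartition = P := by
  have blockMins_eq : (ofPartition n P).blockMins = (Icc 1 n).image (linkMin P) :=
    image_congr fun c hc => parent_ofPartition hP hc
  have block_eq (i : ℕ) :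
      (ofPartition n P).block i = insert i ((Icc 1 n).filter (linkMin P · = i)) := by
    rw [block, filter_congr fun c hc => by rw [parent_ofPartition hP hc]]
  ext B
  simp only [mem_toPartition, blockMins_eq, block_eq, mem_image_linkMin hP]
  constructor
  · rintro ⟨i, ⟨B, hB, hi⟩, rfl⟩
    rwa [← eq_insert_filter_linkMin hP hB hi]
  · intro hB
    have hm := isLeast_min' B (hP.1 B hB).1
    exact ⟨_, ⟨B, hB, hm⟩, (eq_insert_filter_linkMin hP hB hm).symm⟩

variable (g)

def snoc (v : Fin (n + 1)) : Code (n + 1) :=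
  Fin.snoc (α := fun i : Fin (n + 1) => Fin (i + 1)) g v

def snocEquiv (n : ℕ) : Code n × Fin (n + 1) ≃ Code (n + 1) :=
  (Equiv.prodComm _ _).trans (Fin.snocEquiv fun i : Fin (n + 1) => Fin (i + 1))

theorem parent_snoc_of_mem (v : Fin (n + 1)) {c : ℕ} (hc : c ∈ Icc 1 n) :
    (g.snoc v).parent c = g.parent c := by
  have hc' : c ∈ Icc 1 (n + 1) := by grind
  simp only [parent, dif_pos hc, dif_pos hc', snoc]
  exact congrArg (fun x : ℕ => x + 1) (congrArg Fin.val
    (Fin.snoc_castSucc (α := fun i : Fin (n + 1) => Fin (i + 1)) v g ⟨c - 1, by grind⟩))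

theorem parent_snoc_last (v : Fin (n + 1)) : (g.snoc v).parent (n + 1) = v + 1 := by
  have hc : n + 1 ∈ Icc 1 (n + 1) := by grind
  simp only [parent, dif_pos hc, snoc]
  exact congrArg (fun x : ℕ => x + 1) (congrArg Fin.val
    (Fin.snoc_last (α := fun i : Fin (n + 1) => Fin (i + 1)) v g))

theorem blockMins_snoc (v : Fin (n + 1)) :
    (g.snoc v).blockMins = insert ((v : ℕ) + 1) g.blockMins := by
  rw [blockMins, ← insert_Icc_right_eq_Icc_add_one (by omega), image_insert, parent_snoc_last]
  exact congrArg _ (image_congr fun c hc => g.parent_snoc_of_mem v hc)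

theorem card_filter_succ_mem_blockMins :
    #{v : Fin (n + 1) | (v : ℕ) + 1 ∈ g.blockMins} = #g.blockMins := by
  refine card_nbij (fun v => (v : ℕ) + 1) (fun v hv => (mem_filter.1 hv).2)
    (fun v _ w _ h => Fin.ext (by simpa using h)) fun c hc => ?_
  have := mem_Icc.1 (blockMins_subset hc)
  exact ⟨⟨c - 1, by omega⟩, by simpa [show c - 1 + 1 = c by omega] using hc, by simp; omega⟩

theorem card_blockMins_snoc (v : Fin (n + 1)) :
    #(g.snoc v).blockMins = if v ∈ ({v | (v : ℕ) + 1 ∈ g.blockMins} : Finset (Fin (n + 1)))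
      then #g.blockMins else #g.blockMins + 1 := by
  rw [blockMins_snoc, card_insert_eq_ite]
  simp only [mem_filter, mem_univ, true_and]

end Code

noncomputable def Code.equivLinkedPartition (n : ℕ) :
    Code n ≃ {P : Finset (Finset ℕ) // IsLinkedPartition n P} where
  toFun g := ⟨g.toPartition, Code.isLinkedPartition_toPartition⟩
  invFun P := Code.ofPartition n P.1
  left_inv _ := Code.ofPartition_toPartition
  right_inv P := Subtype.ext (Code.toPartition_ofPartition P.2)

theorem card_linkedPartitions_eq_card_blockMins (n k : ℕ) :
    Nat.card {P : Finset (Finset ℕ) // IsLinkedPartition n P ∧ P.card = k} =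
      #{g : Code n | #g.blockMins = k} := by
  rw [← Fintype.card_subtype, ← Nat.card_eq_fintype_card]
  refine Nat.card_congr ((Equiv.subtypeSubtypeEquivSubtypeInter _ _).symm.trans ?_)
  exact ((Code.equivLinkedPartition n).subtypeEquiv fun g => by
    simp [Code.equivLinkedPartition, Code.card_toPartition]).symm

end LinkedPartition

open LinkedPartition in
theorem card_runEnds_eq_card_blockMins (n d : ℕ) :
    #{π : Equiv.Perm (Fin n) | #(runEnds π) = d} = #{g : Code n | #g.blockMins = d} := by
  induction n generalizing d with
  | zero => simp [runEnds, Code.blockMins, apply_ite card]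
  | succ n ih =>
    rw [card_filter_eq_of_prodEquiv (Equiv.Perm.insertMaxEquiv n) _ _ _ (fun _ => card_map _)
        Equiv.Perm.card_runEnds_insertMaxAt,
      card_filter_eq_of_prodEquiv (Code.snocEquiv n) _ _ _
        Code.card_filter_succ_mem_blockMins Code.card_blockMins_snoc, ih]
    cases d with
    | zero => simp
    | succ d => simp only [add_left_inj, ih]

theorem linkedPartitions_blocks_eq_perms_descents_general (n k : ℕ)
    (hn : 1 ≤ n) (hk : 1 ≤ k) :
    Nat.card {P : Finset (Finset ℕ) // IsLinkedPartition n P ∧ P.card = k} =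
      Nat.card {π : Equiv.Perm (Fin n) // (descentSet π).ncard = k - 1} := by
  obtain ⟨m, rfl⟩ := Nat.exists_eq_add_of_le' hn
  rw [LinkedPartition.card_linkedPartitions_eq_card_blockMins, ← card_runEnds_eq_card_blockMins,
    Nat.card_eq_fintype_card, Fintype.card_subtype]
  congr 1
  refine filter_congr fun π _ => ?_
  rw [card_runEnds_eq_ncard_descentSet_add_one]
  omega

/-- The number of linked partitions of `[n]` with exactly `k` blocks equals
the number of permutations of `[n]` with exactly `k - 1` descents. -/
theorem linkedPartitions_blocks_eq_perms_descents (n k : ℕ)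
    (hn : 1 ≤ n) (hk : 1 ≤ k) (hkn : k ≤ n) :
    Nat.card {P : Finset (Finset ℕ) // IsLinkedPartition n P ∧ P.card = k} =
      Nat.card {π : Equiv.Perm (Fin n) // (descentSet π).ncard = k - 1} :=
  linkedPartitions_blocks_eq_perms_descents_general n k hn hk
end

section
/- For all integers n ≥ 1, the total number of linked partitions of [n] equals n!. -/
/-!
A linked partition is determined by its arcs `(i, x)`, `i` being the minimum of a block that
contains `x > i`, and near-disjointness says that every `x` is the right end of at most one arc.
Recording for each `x ∈ [n]` the left end of its arc, or `0` if there is none, is a bijection onto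
the maps `g` with `g x < x` on `[n]`, of which there are `n!`.
-/

open Finset
open scoped Classical
open scoped Nat

section LinkedPartition

variable {n i j x : ℕ} {P : Finset (Finset ℕ)} {B C : Finset ℕ}

theorem IsLinkedPartition.eq_of_min_eq (hP : IsLinkedPartition n P) (hB : B ∈ P)
    (hC : C ∈ P) (hiB : i ∈ B) (hiC : i ∈ C) (hBi : ∀ y ∈ B, i ≤ y)
    (hCi : ∀ y ∈ C, i ≤ y) : B = C := by
  by_contra hne
  rcases hP.2.2 B hB C hC hne i (mem_inter.2 ⟨hiB, hiC⟩) with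
    ⟨-, -, y, hy, hyi⟩ | ⟨-, -, y, hy, hyi⟩
  · exact (hCi y hy).not_gt hyi
  · exact (hBi y hy).not_gt hyi

theorem IsLinkedPartition.isArc_iff (hP : IsLinkedPartition n P) (hB : B ∈ P) (hiB : i ∈ B)
    (hBi : ∀ y ∈ B, i ≤ y) : IsArc P i x ↔ i < x ∧ x ∈ B := by
  constructor
  · rintro ⟨hix, C, hC, hiC, hxC, hCi⟩
    exact ⟨hix, hP.eq_of_min_eq hC hB hiC hiB hCi hBi ▸ hxC⟩
  · rintro ⟨hix, hxB⟩
    exact ⟨hix, B, hB, hiB, hxB, hBi⟩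

theorem IsLinkedPartition.mem_Icc_of_isArc (hP : IsLinkedPartition n P) (h : IsArc P i x) :
    i ∈ Icc 1 n ∧ x ∈ Icc 1 n := by
  obtain ⟨-, B, hB, hiB, hxB, -⟩ := h
  exact ⟨(hP.1 B hB).2 hiB, (hP.1 B hB).2 hxB⟩

/-- Near-disjointness: `x` is a non-minimal element of at most one block. -/
theorem IsLinkedPartition.isArc_unique (hP : IsLinkedPartition n P) (h : IsArc P i x)
    (h' : IsArc P j x) : i = j := by
  obtain ⟨hix, B, hB, hiB, hxB, hBi⟩ := h
  obtain ⟨hjx, C, hC, hjC, hxC, hCj⟩ := h'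
  by_cases hBC : B = C
  · subst hBC
    exact le_antisymm (hBi j hjC) (hCj i hiB)
  rcases hP.2.2 B hB C hC hBC x (mem_inter.2 ⟨hxB, hxC⟩) with ⟨hxmin, -⟩ | ⟨hxmin, -⟩
  · exact absurd (hxmin i hiB) hix.not_ge
  · exact absurd (hxmin j hjC) hjx.not_ge

theorem IsLinkedPartition.exists_min_iff (hP : IsLinkedPartition n P) (hi : i ∈ Icc 1 n) :
    (∃ B ∈ P, i ∈ B ∧ ∀ y ∈ B, i ≤ y) ↔ ¬ IsDestination P i := by
  constructor
  · rintro ⟨B, hB, hiB, hBi⟩ ⟨hleft, j, hji, C, hC, hjC, hiC, hCj⟩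
    have hBC : B ≠ C := by
      rintro rfl
      exact (hBi j hjC).not_gt hji
    rcases hP.2.2 B hB C hC hBC i (mem_inter.2 ⟨hiB, hiC⟩) with
      ⟨-, hcard, -⟩ | ⟨hCi, -⟩
    · obtain ⟨x, hxB, hxi⟩ := exists_mem_ne hcard i
      exact hleft ⟨x, (hP.isArc_iff hB hiB hBi).2 ⟨(hBi x hxB).lt_of_ne' hxi, hxB⟩⟩
    · exact (hCi j hjC).not_gt hji
  · intro hdest
    obtain ⟨x, hx⟩ | hright := not_and_or.1 hdest |>.imp_left not_not.1
    · obtain ⟨-, B, hB, hiB, -, hBi⟩ := hx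
      exact ⟨B, hB, hiB, hBi⟩
    · obtain ⟨B, hB, hiB⟩ := hP.2.1 i hi
      refine ⟨B, hB, hiB, fun y hy => ?_⟩
      by_contra! hyi
      have hmin := B.min'_le y hy
      exact hright ⟨B.min' ⟨y, hy⟩, hmin.trans_lt hyi, B, hB, B.min'_mem _, hiB,
        fun z hz => B.min'_le z hz⟩

variable {g : ℕ → ℕ}

/-- The encoding of a linked partition: `g x` is the minimum of the block in which `x` is not
minimal, or `0` if there is none. -/
def IsParentMap (n : ℕ) (g : ℕ → ℕ) : Prop :=
  (∀ x ∈ Icc 1 n, g x < x) ∧ ∀ x ∉ Icc 1 n, g x = 0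

def parentMapEquiv (n : ℕ) : {g : ℕ → ℕ // IsParentMap n g} ≃ ∀ x : Icc 1 n, Fin x where
  toFun g x := ⟨g.1 x, g.2.1 x x.2⟩
  invFun f := ⟨fun x => if hx : x ∈ Icc 1 n then f ⟨x, hx⟩ else 0,
    fun x hx => by simp [hx], fun x hx => by simp [hx]⟩
  left_inv g := Subtype.ext <| funext fun x => by
    by_cases hx : x ∈ Icc 1 n <;> simp [hx, g.2.2 x]
  right_inv f := by
    funext x
    simp

theorem card_isParentMap (n : ℕ) : Nat.card {g : ℕ → ℕ // IsParentMap n g} = n ! := by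
  rw [Nat.card_congr (parentMapEquiv n), Nat.card_pi]
  simp only [Nat.card_eq_fintype_card, Fintype.card_fin]
  rw [← Ico_add_one_right_eq_Icc, ← prod_Ico_id_eq_factorial]
  exact prod_coe_sort (Ico 1 (n + 1)) id

noncomputable def arcParent (P : Finset (Finset ℕ)) (x : ℕ) : ℕ :=
  if h : IsRightEndpoint P x then h.choose else 0

theorem isArc_arcParent (h : IsRightEndpoint P x) : IsArc P (arcParent P x) x := by
  rw [arcParent, dif_pos h]
  exact h.choose_spec

theorem IsLinkedPartition.arcParent_eq_iff (hP : IsLinkedPartition n P) (hi : 0 < i) :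
    arcParent P x = i ↔ IsArc P i x := by
  constructor
  · rintro rfl
    by_contra h
    rw [arcParent, dif_neg fun hx => h (isArc_arcParent hx)] at hi
    exact hi.false
  · intro h
    exact hP.isArc_unique (isArc_arcParent ⟨i, h⟩) h

theorem IsLinkedPartition.arcParent_eq_zero_iff (hP : IsLinkedPartition n P) :
    arcParent P x = 0 ↔ ¬ IsRightEndpoint P x := by
  constructor
  · intro h0 hx
    have hpos := (mem_Icc.1 (hP.mem_Icc_of_isArc (isArc_arcParent hx)).1).1
    omega
  · intro hx
    rw [arcParent, dif_neg hx]

theorem IsLinkedPartition.isParentMap_arcParent (hP : IsLinkedPartition n P) :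
    IsParentMap n (arcParent P) := by
  constructor
  · intro x hx
    by_cases h : IsRightEndpoint P x
    · exact (isArc_arcParent h).1
    · rw [(hP.arcParent_eq_zero_iff).2 h]
      exact (mem_Icc.1 hx).1
  · intro x hx
    refine (hP.arcParent_eq_zero_iff).2 fun h => hx ?_
    exact (hP.mem_Icc_of_isArc (isArc_arcParent h)).2

def parentBlock (n : ℕ) (g : ℕ → ℕ) (i : ℕ) : Finset ℕ :=
  insert i {x ∈ Icc 1 n | g x = i}

/-- A non-root is not the minimum of any block, so it does not get a block of its own. -/
def IsRoot (n : ℕ) (g : ℕ → ℕ) (i : ℕ) : Prop :=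
  g i = 0 ∨ ∃ x ∈ Icc 1 n, g x = i

noncomputable def parentPartition (n : ℕ) (g : ℕ → ℕ) : Finset (Finset ℕ) :=
  {i ∈ Icc 1 n | IsRoot n g i}.image (parentBlock n g)

theorem mem_parentBlock : x ∈ parentBlock n g i ↔ x = i ∨ x ∈ Icc 1 n ∧ g x = i := by
  simp [parentBlock]

theorem mem_parentPartition :
    B ∈ parentPartition n g ↔ ∃ i ∈ Icc 1 n, IsRoot n g i ∧ parentBlock n g i = B := by
  simp [parentPartition, and_assoc]

theorem IsParentMap.le_of_mem_parentBlock (hg : IsParentMap n g)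
    (hx : x ∈ parentBlock n g i) : i ≤ x := by
  rcases mem_parentBlock.1 hx with rfl | ⟨hxI, rfl⟩
  exacts [le_rfl, (hg.1 x hxI).le]

theorem IsParentMap.nearlyDisjoint_parentBlock {j : ℕ} (hg : IsParentMap n g)
    (hi : ∃ x ∈ Icc 1 n, g x = i) (hj : 1 ≤ j) (hgi : g i = j) :
    (∀ y ∈ parentBlock n g i, i ≤ y) ∧ 1 < (parentBlock n g i).card ∧
      ∃ y ∈ parentBlock n g j, y < i := by
  obtain ⟨z, hz, hgz⟩ := hi
  have hiz : i < z := hgz ▸ hg.1 z hz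
  have hji : j < i := by
    rw [← hgi]
    refine hg.1 i ?_
    by_contra hi
    rw [hg.2 i hi] at hgi
    omega
  refine ⟨fun y hy => hg.le_of_mem_parentBlock hy, one_lt_card.2 ⟨i, ?_, z, ?_, hiz.ne⟩,
    j, ?_, hji⟩ <;> simp [mem_parentBlock, hz, hgz]

theorem IsParentMap.isLinkedPartition_parentPartition (hg : IsParentMap n g) :
    IsLinkedPartition n (parentPartition n g) := by
  refine ⟨?_, ?_, ?_⟩
  · intro B hB
    obtain ⟨i, hi, -, rfl⟩ := mem_parentPartition.1 hB
    refine ⟨⟨i, mem_insert_self _ _⟩, insert_subset hi (filter_subset _ _)⟩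
  · intro x hx
    by_cases h0 : g x = 0
    · exact ⟨_, mem_parentPartition.2 ⟨x, hx, Or.inl h0, rfl⟩, mem_insert_self _ _⟩
    · have hgx : g x ∈ Icc 1 n := by
        have := hg.1 x hx
        simp only [mem_Icc] at hx ⊢
        omega
      exact ⟨_, mem_parentPartition.2 ⟨g x, hgx, Or.inr ⟨x, hx, rfl⟩, rfl⟩,
        mem_parentBlock.2 (Or.inr ⟨hx, rfl⟩)⟩
  · rintro B hB C hC hne x hx
    obtain ⟨i, hi, hri, rfl⟩ := mem_parentPartition.1 hB
    obtain ⟨j, hj, hrj, rfl⟩ := mem_parentPartition.1 hC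
    have hij : i ≠ j := fun h => hne (h ▸ rfl)
    have hi1 := (mem_Icc.1 hi).1
    have hj1 := (mem_Icc.1 hj).1
    rw [mem_inter, mem_parentBlock, mem_parentBlock] at hx
    rcases hx with ⟨rfl | ⟨-, hgi⟩, rfl | ⟨-, hgj⟩⟩
    · exact absurd rfl hij
    · exact Or.inl (hg.nearlyDisjoint_parentBlock (hri.resolve_left (by omega)) hj1 hgj)
    · exact Or.inr (hg.nearlyDisjoint_parentBlock (hrj.resolve_left (by omega)) hi1 hgi)
    · exact absurd (hgi ▸ hgj) hij

theorem IsParentMap.isArc_parentPartition_iff (hg : IsParentMap n g) :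
    IsArc (parentPartition n g) i x ↔ 0 < i ∧ x ∈ Icc 1 n ∧ g x = i := by
  constructor
  · rintro ⟨hix, B, hB, hiB, hxB, hBi⟩
    obtain ⟨j, hj, -, rfl⟩ := mem_parentPartition.1 hB
    obtain rfl : i = j :=
      le_antisymm (hBi j (mem_insert_self _ _)) (hg.le_of_mem_parentBlock hiB)
    rcases mem_parentBlock.1 hxB with rfl | ⟨hx, hgx⟩
    · exact absurd hix (lt_irrefl _)
    · exact ⟨(mem_Icc.1 hj).1, hx, hgx⟩
  · rintro ⟨hi, hx, rfl⟩
    have hix := hg.1 x hx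
    have hgx : g x ∈ Icc 1 n := by
      simp only [mem_Icc] at hx ⊢
      omega
    exact ⟨hix, _, mem_parentPartition.2 ⟨g x, hgx, Or.inr ⟨x, hx, rfl⟩, rfl⟩,
      mem_insert_self _ _, mem_parentBlock.2 (Or.inr ⟨hx, rfl⟩),
      fun y hy => hg.le_of_mem_parentBlock hy⟩

theorem IsParentMap.arcParent_parentPartition (hg : IsParentMap n g) :
    arcParent (parentPartition n g) = g := by
  have hP := hg.isLinkedPartition_parentPartition
  funext x
  rcases Nat.eq_zero_or_pos (g x) with h0 | hpos
  · rw [h0, hP.arcParent_eq_zero_iff]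
    rintro ⟨i, hi⟩
    obtain ⟨hi, -, rfl⟩ := hg.isArc_parentPartition_iff.1 hi
    omega
  · have hx : x ∈ Icc 1 n := by
      by_contra hx
      rw [hg.2 x hx] at hpos
      exact hpos.false
    rw [hP.arcParent_eq_iff hpos, hg.isArc_parentPartition_iff]
    exact ⟨hpos, hx, rfl⟩

theorem IsLinkedPartition.parentBlock_arcParent (hP : IsLinkedPartition n P)
    (hB : B ∈ P) (hiB : i ∈ B) (hBi : ∀ y ∈ B, i ≤ y) :
    parentBlock n (arcParent P) i = B := by
  have hi := (mem_Icc.1 ((hP.1 B hB).2 hiB)).1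
  ext x
  rw [mem_parentBlock, hP.arcParent_eq_iff hi, hP.isArc_iff hB hiB hBi]
  constructor
  · rintro (rfl | ⟨-, -, hxB⟩)
    exacts [hiB, hxB]
  · intro hxB
    rcases (hBi x hxB).eq_or_lt with rfl | hix
    exacts [Or.inl rfl, Or.inr ⟨(hP.1 B hB).2 hxB, hix, hxB⟩]

theorem IsLinkedPartition.isRoot_arcParent_iff (hP : IsLinkedPartition n P) (hi : i ∈ Icc 1 n) :
    IsRoot n (arcParent P) i ↔ ∃ B ∈ P, i ∈ B ∧ ∀ y ∈ B, i ≤ y := by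
  rw [hP.exists_min_iff hi, IsDestination, IsRoot, hP.arcParent_eq_zero_iff, IsLeftEndpoint]
  simp only [hP.arcParent_eq_iff (mem_Icc.1 hi).1]
  constructor
  · rintro (h | ⟨x, -, hx⟩) ⟨hleft, hright⟩
    exacts [h hright, hleft ⟨x, hx⟩]
  · intro h
    by_cases hleft : ∃ x, IsArc P i x
    · obtain ⟨x, hx⟩ := hleft
      exact Or.inr ⟨x, (hP.mem_Icc_of_isArc hx).2, hx⟩
    · exact Or.inl fun hright => h ⟨hleft, hright⟩

theorem IsLinkedPartition.parentPartition_arcParent (hP : IsLinkedPartition n P) :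
    parentPartition n (arcParent P) = P := by
  ext B
  rw [mem_parentPartition]
  constructor
  · rintro ⟨i, hi, hri, rfl⟩
    obtain ⟨C, hC, hiC, hCi⟩ := (hP.isRoot_arcParent_iff hi).1 hri
    rwa [hP.parentBlock_arcParent hC hiC hCi]
  · intro hB
    obtain ⟨hBne, hBsub⟩ := hP.1 B hB
    have hmin : ∀ y ∈ B, B.min' hBne ≤ y := fun y hy => B.min'_le y hy
    have hi := hBsub (B.min'_mem hBne)
    exact ⟨B.min' hBne, hi, (hP.isRoot_arcParent_iff hi).2 ⟨B, hB, B.min'_mem hBne, hmin⟩,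
      hP.parentBlock_arcParent hB (B.min'_mem hBne) hmin⟩

noncomputable def linkedPartitionEquivParentMap (n : ℕ) :
    {P : Finset (Finset ℕ) // IsLinkedPartition n P} ≃
      {g : ℕ → ℕ // IsParentMap n g} where
  toFun P := ⟨arcParent P, P.2.isParentMap_arcParent⟩
  invFun g := ⟨parentPartition n g, g.2.isLinkedPartition_parentPartition⟩
  left_inv P := Subtype.ext P.2.parentPartition_arcParent
  right_inv g := Subtype.ext g.2.arcParent_parentPartition

end LinkedPartition

theorem card_linkedPartitions_eq_factorial_general (n : ℕ) :
    Nat.card {P : Finset (Finset ℕ) // IsLinkedPartition n P} = Nat.factorial n := by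
  rw [Nat.card_congr (linkedPartitionEquivParentMap n), card_isParentMap]

/-- The total number of linked partitions of `[n]` equals `n!`. -/
theorem card_linkedPartitions_eq_factorial (n : ℕ) (hn : 1 ≤ n) :
    Nat.card {P : Finset (Finset ℕ) // IsLinkedPartition n P} = Nat.factorial n :=
  card_linkedPartitions_eq_factorial_general n
end

section
/- For all integers n ≥ 1 and 0 ≤ k ≤ n, the number of linked partitions of [n] with exactly k singletons equals the number of permutation tableaux of length n that have exactly k rows containing neither a topmost 1 nor a restricted 0. -/
/-!
Both families are in bijection with *parent maps*: forests on `{0, …, n - 1}` in which every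
vertex is larger than its parent.

By near-disjointness, at most one arc of a linked partition ends at any given element, and the
parent of `j` is the left end of that arc. Conversely, the blocks are the vertices that are roots
or have a child, each taken together with its children, so the singletons are the isolated
vertices.

In the tableau of a parent map, the rows are the roots and the vertices with a child, and the
columns are the remaining vertices. The dotted cells of a column (its topmost `1` and the
restricted `0`s that are rightmost in their rows), read from bottom to top, are the first steps of
the path from that column to its root. A row without a restricted `0` is a root, and a root
carries a topmost `1` exactly when it has a child. Hence the rows with neither a topmost `1` nor a
restricted `0` are again the isolated vertices.
-/

theorem Finset.max_eq_coe_iff {α : Type*} [LinearOrder α] {s : Finset α} {a : α} :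
    s.max = a ↔ a ∈ s ∧ ∀ b ∈ s, b ≤ a :=
  ⟨fun h => ⟨Finset.mem_of_max h, fun _ hb => Finset.le_max_of_eq hb h⟩,
    fun ⟨ha, hle⟩ => le_antisymm (Finset.max_le fun b hb => WithBot.coe_le_coe.2 (hle b hb))
      (Finset.le_max ha)⟩

theorem Finset.min_eq_coe_iff {α : Type*} [LinearOrder α] {s : Finset α} {a : α} :
    s.min = a ↔ a ∈ s ∧ ∀ b ∈ s, a ≤ b :=
  ⟨fun h => ⟨Finset.mem_of_min h, fun _ hb => Finset.min_le_of_eq hb h⟩,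
    fun ⟨ha, hle⟩ => le_antisymm (Finset.min_le ha)
      (Finset.le_min fun b hb => WithTop.coe_le_coe.2 (hle b hb))⟩

/-! ### Parent maps -/

/-- A forest on `0 < 1 < ⋯ < n-1` in which every vertex lies above its parent. -/
@[ext]
structure ParentMap (n : ℕ) where
  parent : Fin n → Option (Fin n)
  parent_lt : ∀ x y, parent x = some y → y < x

namespace ParentMap

variable {n : ℕ} (g : ParentMap n)

def HasChild (x : Fin n) : Prop := ∃ y, g.parent y = some x

def IsIsolated (x : Fin n) : Prop := g.parent x = none ∧ ¬ g.HasChild x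

def IsRow (x : Fin n) : Prop := g.parent x = none ∨ g.HasChild x

/-- `g.Reach j i`: `i` is a proper ancestor of `j`. -/
def Reach : Fin n → Fin n → Prop := Relation.TransGen fun a b => g.parent a = some b

variable {g}

theorem Reach.lt {j i : Fin n} (h : g.Reach j i) : i < j := by
  induction h with
  | single h => exact g.parent_lt _ _ h
  | tail _ h ih => exact (g.parent_lt _ _ h).trans ih

theorem Reach.hasChild {j i : Fin n} (h : g.Reach j i) : g.HasChild i := by
  cases h with
  | single h => exact ⟨_, h⟩
  | tail _ h => exact ⟨_, h⟩

theorem reach_of_parent {j i : Fin n} (h : g.parent j = some i) : g.Reach j i :=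
  Relation.TransGen.single h

theorem Reach.eq_or_reach_of_parent {x y z : Fin n} (h : g.Reach x z) (hxy : g.parent x = some y) :
    z = y ∨ g.Reach y z := by
  rcases Relation.TransGen.head'_iff.mp h with ⟨y', hy', hz⟩
  obtain rfl : y' = y := Option.some_injective _ (hy'.symm.trans hxy)
  exact Relation.reflTransGen_iff_eq_or_transGen.mp hz

theorem Reach.parent_ne_none {j i : Fin n} (h : g.Reach j i) : g.parent j ≠ none := by
  rcases Relation.TransGen.head'_iff.mp h with ⟨y, hy, -⟩
  simp [hy]

theorem Reach.total {j a b : Fin n} (ha : g.Reach j a) (hb : g.Reach j b) :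
    a = b ∨ g.Reach a b ∨ g.Reach b a := by
  induction ha using Relation.TransGen.head_induction_on with
  | single h =>
    rcases hb.eq_or_reach_of_parent h with rfl | hb
    · exact Or.inl rfl
    · exact Or.inr (Or.inl hb)
  | head h ha ih =>
    rcases hb.eq_or_reach_of_parent h with rfl | hb
    · exact Or.inr (Or.inr ha)
    · exact ih hb

theorem Reach.reach_of_lt {c x y : Fin n} (hx : g.Reach c x) (hy : g.Reach c y) (hlt : y < x) :
    g.Reach x y := by
  rcases hx.total hy with rfl | h | h
  · exact absurd hlt (lt_irrefl _)
  · exact h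
  · exact absurd h.lt (not_lt.mpr hlt.le)

theorem Reach.le_of_parent {x y p : Fin n} (h : g.Reach x y) (hp : g.parent x = some p) : y ≤ p :=
  (h.eq_or_reach_of_parent hp).elim le_of_eq fun h => h.lt.le

theorem exists_reach_root {j : Fin n} (hj : g.parent j ≠ none) :
    ∃ e, g.Reach j e ∧ g.parent e = none := by
  induction j using WellFoundedLT.induction with
  | _ j ih =>
    obtain ⟨y, hy⟩ := Option.ne_none_iff_exists'.mp hj
    by_cases hyr : g.parent y = none
    · exact ⟨y, reach_of_parent hy, hyr⟩
    · obtain ⟨e, he, her⟩ := ih y (g.parent_lt _ _ hy) hyr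
      exact ⟨e, Relation.TransGen.head hy he, her⟩

theorem exists_col_reach {x : Fin n} (hx : g.HasChild x) : ∃ j, ¬ g.IsRow j ∧ g.Reach j x := by
  induction x using WellFoundedGT.induction with
  | _ x ih =>
    obtain ⟨y, hy⟩ := hx
    by_cases hyc : g.HasChild y
    · obtain ⟨j, hj, hjy⟩ := ih y (g.parent_lt _ _ hy) hyc
      exact ⟨j, hj, hjy.tail hy⟩
    · exact ⟨y, by simp [IsRow, hy, hyc], reach_of_parent hy⟩

theorem exists_max_col_reach {x : Fin n} (hx : g.HasChild x) :
    ∃ c, (¬ g.IsRow c ∧ g.Reach c x) ∧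
      ∀ c', ¬ g.IsRow c' → g.Reach c' x → c' ≤ c := by
  classical
  obtain ⟨j, hj⟩ := exists_col_reach hx
  obtain ⟨c, hc, hmax⟩ := (Finset.univ.filter fun c => ¬ g.IsRow c ∧ g.Reach c x)
    |>.exists_max_image id ⟨j, by simpa using hj⟩
  exact ⟨c, by simpa using hc, fun c' h1 h2 => hmax c' (by simpa using ⟨h1, h2⟩)⟩

end ParentMap

/-! ### Linked partitions -/

namespace IsLinkedPartition

variable {n : ℕ} {P : Finset (Finset ℕ)}

theorem block_eq_of_min_mem (hP : IsLinkedPartition n P) {B C : Finset ℕ} {m : ℕ}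
    (hB : B ∈ P) (hC : C ∈ P) (hmB : m ∈ B) (hmC : m ∈ C)
    (hminB : ∀ y ∈ B, m ≤ y) (hminC : ∀ y ∈ C, m ≤ y) : B = C := by
  by_contra hne
  rcases hP.2.2 B hB C hC hne m (Finset.mem_inter.mpr ⟨hmB, hmC⟩) with
    ⟨-, -, y, hy, hylt⟩ | ⟨-, -, y, hy, hylt⟩
  · exact absurd (hminC y hy) (by omega)
  · exact absurd (hminB y hy) (by omega)

theorem left_eq_of_isArc (hP : IsLinkedPartition n P) {a a' b : ℕ}
    (h : IsArc P a b) (h' : IsArc P a' b) : a = a' := by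
  obtain ⟨hab, B, hB, haB, hbB, hmin⟩ := h
  obtain ⟨hab', B', hB', haB', hbB', hmin'⟩ := h'
  by_cases hBB : B = B'
  · subst hBB
    exact le_antisymm (hmin a' haB') (hmin' a haB)
  · rcases hP.2.2 B hB B' hB' hBB b (Finset.mem_inter.mpr ⟨hbB, hbB'⟩) with
      ⟨hm, -, -⟩ | ⟨hm, -, -⟩
    · exact absurd (hm a haB) (by omega)
    · exact absurd (hm a' haB') (by omega)

end IsLinkedPartition

theorem isArc_of_mem {P : Finset (Finset ℕ)} {B : Finset ℕ} {m b : ℕ} (hB : B ∈ P)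
    (hmB : m ∈ B) (hmin : ∀ y ∈ B, m ≤ y) (hbB : b ∈ B) (hne : b ≠ m) : IsArc P m b :=
  ⟨lt_of_le_of_ne (hmin b hbB) (Ne.symm hne), B, hB, hmB, hbB, hmin⟩

theorem exists_fin_add_one_eq {n y : ℕ} (hy : y ∈ Finset.Icc 1 n) :
    ∃ x : Fin n, (x : ℕ) + 1 = y := by
  rw [Finset.mem_Icc] at hy
  exact ⟨⟨y - 1, by omega⟩, by simp; omega⟩

namespace ParentMap

variable {n : ℕ} (g : ParentMap n)

open Classical in
-- The vertex `x : Fin n` stands for the element `x + 1` of `[n]`.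
noncomputable def block (i : Fin n) : Finset ℕ :=
  insert ((i : ℕ) + 1) ((Finset.univ.filter (g.parent · = some i)).image fun j => (j : ℕ) + 1)

open Classical in
noncomputable def toLinkedPartition : Finset (Finset ℕ) :=
  (Finset.univ.filter g.IsRow).image g.block

variable {g}

theorem mem_block {i : Fin n} {y : ℕ} :
    y ∈ g.block i ↔ y = (i : ℕ) + 1 ∨ ∃ j, g.parent j = some i ∧ (j : ℕ) + 1 = y := by
  simp [block]

theorem self_mem_block (i : Fin n) : (i : ℕ) + 1 ∈ g.block i := mem_block.mpr (Or.inl rfl)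

theorem le_of_mem_block {i : Fin n} {y : ℕ} (hy : y ∈ g.block i) : (i : ℕ) + 1 ≤ y := by
  rcases mem_block.mp hy with rfl | ⟨j, hj, rfl⟩
  · exact le_rfl
  · exact Nat.succ_le_succ (g.parent_lt _ _ hj).le

theorem one_lt_card_block {i : Fin n} (hi : g.HasChild i) : 1 < (g.block i).card := by
  obtain ⟨j, hj⟩ := hi
  refine Finset.one_lt_card.mpr
    ⟨_, self_mem_block i, _, mem_block.mpr (Or.inr ⟨j, hj, rfl⟩), ?_⟩
  have := g.parent_lt _ _ hj
  omega

theorem block_subset_Icc (i : Fin n) : g.block i ⊆ Finset.Icc 1 n := by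
  intro y hy
  rw [Finset.mem_Icc]
  rcases mem_block.mp hy with rfl | ⟨j, -, rfl⟩ <;> omega

theorem mem_toLinkedPartition {B : Finset ℕ} :
    B ∈ g.toLinkedPartition ↔ ∃ i, g.IsRow i ∧ g.block i = B := by
  simp [toLinkedPartition]

theorem isArc_toLinkedPartition {a b : ℕ} :
    IsArc g.toLinkedPartition a b ↔
      ∃ i j : Fin n, g.parent j = some i ∧ a = (i : ℕ) + 1 ∧ b = (j : ℕ) + 1 := by
  constructor
  · rintro ⟨hab, B, hB, haB, hbB, hmin⟩
    obtain ⟨i, -, rfl⟩ := mem_toLinkedPartition.mp hB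
    obtain rfl : a = (i : ℕ) + 1 := le_antisymm (hmin _ (self_mem_block i)) (le_of_mem_block haB)
    rcases mem_block.mp hbB with rfl | ⟨j, hj, rfl⟩
    · omega
    · exact ⟨i, j, hj, rfl, rfl⟩
  · rintro ⟨i, j, hij, rfl, rfl⟩
    exact isArc_of_mem (mem_toLinkedPartition.mpr ⟨i, Or.inr ⟨j, hij⟩, rfl⟩)
      (self_mem_block i) (fun _ => le_of_mem_block) (mem_block.mpr (Or.inr ⟨j, hij, rfl⟩))
      (by have := g.parent_lt _ _ hij; omega)

theorem block_nearlyDisjoint_of_mem {i i' : Fin n} (hi : g.IsRow i) (hne : i ≠ i')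
    (h : (i : ℕ) + 1 ∈ g.block i') :
    (∀ y ∈ g.block i, (i : ℕ) + 1 ≤ y) ∧ 1 < (g.block i).card ∧
      ∃ y ∈ g.block i', y < (i : ℕ) + 1 := by
  rcases mem_block.mp h with h | ⟨j, hj, hji⟩
  · exact absurd (Fin.ext (by omega)) hne
  obtain rfl : j = i := Fin.ext (by omega)
  have hchild : g.HasChild j := hi.resolve_left (by simp [hj])
  exact ⟨fun _ => le_of_mem_block, one_lt_card_block hchild, _, self_mem_block i',
    by have := g.parent_lt _ _ hj; omega⟩

theorem isLinkedPartition_toLinkedPartition : IsLinkedPartition n g.toLinkedPartition := by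
  refine ⟨?_, ?_, ?_⟩
  · rintro B hB
    obtain ⟨i, -, rfl⟩ := mem_toLinkedPartition.mp hB
    exact ⟨⟨_, self_mem_block i⟩, block_subset_Icc i⟩
  · intro x hx
    obtain ⟨j, rfl⟩ := exists_fin_add_one_eq hx
    cases hj : g.parent j with
    | none =>
      exact ⟨g.block j, mem_toLinkedPartition.mpr ⟨j, Or.inl hj, rfl⟩, self_mem_block j⟩
    | some i => exact ⟨g.block i, mem_toLinkedPartition.mpr ⟨i, Or.inr ⟨j, hj⟩, rfl⟩,
        mem_block.mpr (Or.inr ⟨j, hj, rfl⟩)⟩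
  · intro B hB C hC hBC x hx
    obtain ⟨i, hi, rfl⟩ := mem_toLinkedPartition.mp hB
    obtain ⟨i', hi', rfl⟩ := mem_toLinkedPartition.mp hC
    have hne : i ≠ i' := by rintro rfl; exact hBC rfl
    obtain ⟨hxB, hxC⟩ := Finset.mem_inter.mp hx
    rcases mem_block.mp hxB with rfl | ⟨j, hj, rfl⟩
    · exact Or.inl (block_nearlyDisjoint_of_mem hi hne hxC)
    rcases mem_block.mp hxC with h | ⟨j', hj', hjj'⟩
    · rw [h] at hxB ⊢
      exact Or.inr (block_nearlyDisjoint_of_mem hi' hne.symm hxB)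
    · obtain rfl : j' = j := Fin.ext (by omega)
      exact absurd (Option.some_injective _ (hj.symm.trans hj')) hne

theorem isLeftEndpoint_toLinkedPartition {x : Fin n} :
    IsLeftEndpoint g.toLinkedPartition ((x : ℕ) + 1) ↔ g.HasChild x := by
  simp only [IsLeftEndpoint, isArc_toLinkedPartition]
  constructor
  · rintro ⟨-, i, j, hj, hi, -⟩
    obtain rfl : i = x := Fin.ext (by omega)
    exact ⟨j, hj⟩
  · rintro ⟨j, hj⟩
    exact ⟨_, x, j, hj, rfl, rfl⟩

theorem isRightEndpoint_toLinkedPartition {x : Fin n} :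
    IsRightEndpoint g.toLinkedPartition ((x : ℕ) + 1) ↔ g.parent x ≠ none := by
  simp only [IsRightEndpoint, isArc_toLinkedPartition]
  constructor
  · rintro ⟨-, i, j, hj, -, hjx⟩
    obtain rfl : j = x := Fin.ext (by omega)
    simp [hj]
  · intro hx
    obtain ⟨i, hi⟩ := Option.ne_none_iff_exists'.mp hx
    exact ⟨_, i, x, hi, rfl, rfl⟩

theorem isSingletonVertex_toLinkedPartition :
    {y | IsSingletonVertex n g.toLinkedPartition y} =
      (fun x : Fin n => (x : ℕ) + 1) '' {x | g.IsIsolated x} := by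
  ext y
  constructor
  · rintro ⟨hy, hl, hr⟩
    obtain ⟨x, rfl⟩ := exists_fin_add_one_eq hy
    rw [isLeftEndpoint_toLinkedPartition] at hl
    rw [isRightEndpoint_toLinkedPartition, not_not] at hr
    exact ⟨x, ⟨hr, hl⟩, rfl⟩
  · rintro ⟨x, ⟨hr, hl⟩, rfl⟩
    refine ⟨Finset.mem_Icc.mpr ⟨Nat.le_add_left 1 _, x.isLt⟩, ?_, ?_⟩
    · rwa [isLeftEndpoint_toLinkedPartition]
    · rwa [isRightEndpoint_toLinkedPartition, not_not]

open Classical in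
noncomputable def ofLinkedPartition (P : Finset (Finset ℕ)) : ParentMap n where
  parent j :=
    if h : ∃ i : Fin n, IsArc P ((i : ℕ) + 1) ((j : ℕ) + 1) then some h.choose else none
  parent_lt j i h := by
    split_ifs at h with hex
    cases h
    have := hex.choose_spec.1
    exact Fin.lt_def.mpr (by omega)

variable {P : Finset (Finset ℕ)}

theorem ofLinkedPartition_parent_eq_some (hP : IsLinkedPartition n P) {i j : Fin n} :
    (ofLinkedPartition P).parent j = some i ↔ IsArc P ((i : ℕ) + 1) ((j : ℕ) + 1) := by
  simp only [ofLinkedPartition]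
  split_ifs with hex
  · refine ⟨fun h => Option.some_injective _ h ▸ hex.choose_spec, fun harc => ?_⟩
    have := hP.left_eq_of_isArc hex.choose_spec harc
    exact congrArg some (Fin.ext (by omega))
  · simpa using fun harc => hex ⟨i, harc⟩

theorem ofLinkedPartition_toLinkedPartition (g : ParentMap n) :
    ofLinkedPartition g.toLinkedPartition = g := by
  ext j i
  rw [ofLinkedPartition_parent_eq_some
    isLinkedPartition_toLinkedPartition, isArc_toLinkedPartition]
  constructor
  · rintro ⟨i', j', h, hi, hj⟩
    obtain rfl : i' = i := Fin.ext (by omega)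
    obtain rfl : j' = j := Fin.ext (by omega)
    exact h
  · exact fun h => ⟨i, j, h, rfl, rfl⟩

theorem block_ofLinkedPartition (hP : IsLinkedPartition n P) {B : Finset ℕ} (hB : B ∈ P)
    {i : Fin n} (hiB : (i : ℕ) + 1 ∈ B) (hmin : ∀ y ∈ B, (i : ℕ) + 1 ≤ y) :
    (ofLinkedPartition P).block i = B := by
  ext y
  rw [mem_block]
  constructor
  · rintro (rfl | ⟨j, hj, rfl⟩)
    · exact hiB
    · obtain ⟨-, C, hC, hiC, hjC, hminC⟩ := (ofLinkedPartition_parent_eq_some hP).mp hj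
      rwa [hP.block_eq_of_min_mem hB hC hiB hiC hmin hminC]
  · intro hy
    by_cases hyi : y = (i : ℕ) + 1
    · exact Or.inl hyi
    obtain ⟨j, rfl⟩ := exists_fin_add_one_eq ((hP.1 B hB).2 hy)
    exact Or.inr ⟨j, (ofLinkedPartition_parent_eq_some hP).mpr
      (isArc_of_mem hB hiB hmin hy hyi), rfl⟩

theorem isRow_ofLinkedPartition_iff (hP : IsLinkedPartition n P) {i : Fin n} :
    (ofLinkedPartition P).IsRow i ↔
      ∃ B ∈ P, (i : ℕ) + 1 ∈ B ∧ ∀ y ∈ B, (i : ℕ) + 1 ≤ y := by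
  constructor
  · rintro (hroot | ⟨j, hj⟩)
    · obtain ⟨C, hC, hiC⟩ := hP.2.1 _ (Finset.mem_Icc.mpr ⟨Nat.le_add_left 1 _, i.isLt⟩)
      obtain ⟨m, hmC, hmin⟩ := C.exists_min_image id (hP.1 C hC).1
      obtain ⟨i', rfl⟩ := exists_fin_add_one_eq ((hP.1 C hC).2 hmC)
      refine ⟨C, hC, hiC, fun y hy => le_trans ?_ (hmin y hy)⟩
      by_contra hlt
      have harc := isArc_of_mem hC hmC hmin hiC (by simp only [id] at hlt; omega)
      simp [(ofLinkedPartition_parent_eq_some hP).mpr harc] at hroot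
    · obtain ⟨-, B, hB, hiB, -, hmin⟩ := (ofLinkedPartition_parent_eq_some hP).mp hj
      exact ⟨B, hB, hiB, hmin⟩
  · rintro ⟨B, hB, hiB, hmin⟩
    by_contra hrow
    obtain ⟨hroot, hleaf⟩ := not_or.mp hrow
    obtain ⟨i', hi'⟩ := Option.ne_none_iff_exists'.mp hroot
    obtain ⟨-, C, hC, hi'C, hiC, -⟩ := (ofLinkedPartition_parent_eq_some hP).mp hi'
    have hBC : B ≠ C := by
      rintro rfl
      have := hmin _ hi'C
      have := (ofLinkedPartition P).parent_lt _ _ hi'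
      omega
    rcases hP.2.2 B hB C hC hBC _ (Finset.mem_inter.mpr ⟨hiB, hiC⟩) with
      ⟨-, hcard, -⟩ | ⟨hm, -, -⟩
    · obtain ⟨b, hbB, hbi⟩ := Finset.exists_mem_ne hcard _
      obtain ⟨j, rfl⟩ := exists_fin_add_one_eq ((hP.1 B hB).2 hbB)
      exact hleaf ⟨j, (ofLinkedPartition_parent_eq_some hP).mpr
        (isArc_of_mem hB hiB hmin hbB hbi)⟩
    · have := hm _ hi'C
      have := (ofLinkedPartition P).parent_lt _ _ hi'
      omega

theorem toLinkedPartition_ofLinkedPartition (hP : IsLinkedPartition n P) :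
    (ofLinkedPartition P : ParentMap n).toLinkedPartition = P := by
  ext B
  rw [mem_toLinkedPartition]
  constructor
  · rintro ⟨i, hi, rfl⟩
    obtain ⟨B, hB, hiB, hmin⟩ := (isRow_ofLinkedPartition_iff hP).mp hi
    rwa [block_ofLinkedPartition hP hB hiB hmin]
  · intro hB
    obtain ⟨m, hmB, hmin⟩ := B.exists_min_image id (hP.1 B hB).1
    obtain ⟨i, rfl⟩ := exists_fin_add_one_eq ((hP.1 B hB).2 hmB)
    exact ⟨i, (isRow_ofLinkedPartition_iff hP).mpr ⟨B, hB, hmB, hmin⟩,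
      block_ofLinkedPartition hP hB hmB hmin⟩

noncomputable def linkedPartitionEquiv :
    {P : Finset (Finset ℕ) // IsLinkedPartition n P} ≃ ParentMap n where
  toFun P := ofLinkedPartition P.1
  invFun g := ⟨g.toLinkedPartition, isLinkedPartition_toLinkedPartition⟩
  left_inv P := Subtype.ext (toLinkedPartition_ofLinkedPartition P.2)
  right_inv := ofLinkedPartition_toLinkedPartition

theorem ncard_isSingletonVertex (hP : IsLinkedPartition n P) :
    {x | IsSingletonVertex n P x}.ncard =
      {x | (ofLinkedPartition P : ParentMap n).IsIsolated x}.ncard := by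
  conv_lhs => rw [← toLinkedPartition_ofLinkedPartition hP, isSingletonVertex_toLinkedPartition]
  exact Set.ncard_image_of_injective _ fun a b h => Fin.ext (by simpa using h)

end ParentMap

/-! ### Permutation tableaux -/

namespace ParentMap

variable {n : ℕ} (g : ParentMap n)

open Classical in
noncomputable def descendantCols (i : Fin n) : Finset (Fin n) :=
  Finset.univ.filter fun j => ¬ g.IsRow j ∧ g.Reach j i

open Classical in
/-- The column of the rightmost restricted `0` of row `i` in `g.toTableau`. -/
noncomputable def zeroCol (i : Fin n) : Option (Fin n) :=
  if g.parent i = none then none else (g.descendantCols i).max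

open Classical in
/-- The row of the topmost `1` of column `j` in `g.toTableau`. -/
noncomputable def oneRow (j : Fin n) : Option (Fin n) :=
  (Finset.univ.filter fun x => g.Reach j x ∧ g.zeroCol x ≠ some j).max

/-- Below the topmost `1` of its column, a cell holds a `1` iff it lies to the right of the
rightmost restricted `0` of its row. -/
def Filled (i j : Fin n) : Prop :=
  g.IsRow i ∧ ¬ g.IsRow j ∧ i < j ∧
    (g.oneRow j = some i ∨
      ∃ t, g.oneRow j = some t ∧ t < i ∧ ∀ c, g.zeroCol i = some c → j < c)

variable {g}

theorem zeroCol_eq_none {i : Fin n} (h : g.parent i = none) : g.zeroCol i = none := by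
  simp [zeroCol, h]

theorem zeroCol_eq_some {i c : Fin n} :
    g.zeroCol i = some c ↔ g.parent i ≠ none ∧ (¬ g.IsRow c ∧ g.Reach c i) ∧
      ∀ c', ¬ g.IsRow c' → g.Reach c' i → c' ≤ c := by
  by_cases h : g.parent i = none
  · simp [zeroCol, h]
  · simp only [zeroCol, h, ↓reduceIte]
    refine Finset.max_eq_coe_iff.trans ?_
    simp [descendantCols, h]

theorem exists_zeroCol {i : Fin n} (hrow : g.IsRow i) (hne : g.parent i ≠ none) :
    ∃ c, g.zeroCol i = some c := by
  obtain ⟨c, hc⟩ := exists_max_col_reach (hrow.resolve_left hne)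
  exact ⟨c, zeroCol_eq_some.mpr ⟨hne, hc⟩⟩

theorem isRow_and_zeroCol_eq_none {x : Fin n} :
    g.IsRow x ∧ g.zeroCol x = none ↔ g.parent x = none := by
  refine ⟨fun ⟨hrow, hz⟩ => by_contra fun hne => ?_,
    fun h => ⟨Or.inl h, zeroCol_eq_none h⟩⟩
  obtain ⟨c, hc⟩ := exists_zeroCol hrow hne
  simp [hz] at hc

theorem zeroCol_eq_of_reach {c z x : Fin n} (hzx : g.Reach z x) (hcz : g.Reach c z)
    (hc : ¬ g.IsRow c) (hmax : ∀ c', ¬ g.IsRow c' → g.Reach c' x → c' ≤ c) :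
    g.zeroCol z = some c :=
  zeroCol_eq_some.mpr
    ⟨hzx.parent_ne_none, ⟨hc, hcz⟩, fun c' h1 h2 => hmax c' h1 (h2.trans hzx)⟩

theorem oneRow_eq_some {j t : Fin n} :
    g.oneRow j = some t ↔ (g.Reach j t ∧ g.zeroCol t ≠ some j) ∧
      ∀ x, g.Reach j x → g.zeroCol x ≠ some j → x ≤ t :=
  Finset.max_eq_coe_iff.trans (by simp)

open Classical in
theorem exists_oneRow {j : Fin n} (hj : ¬ g.IsRow j) : ∃ t, g.oneRow j = some t := by
  obtain ⟨e, he, hroot⟩ := exists_reach_root (fun h => hj (Or.inl h))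
  exact Finset.max_of_mem (s := Finset.univ.filter fun x => g.Reach j x ∧ g.zeroCol x ≠ some j)
    (a := e) (by simp [he, zeroCol_eq_none hroot])

theorem oneRow_lt_of_zeroCol {x c : Fin n} (hc : g.zeroCol x = some c) :
    ∃ t, g.oneRow c = some t ∧ t < x := by
  obtain ⟨-, ⟨hccol, hcx⟩, hmax⟩ := zeroCol_eq_some.mp hc
  obtain ⟨t, ht⟩ := exists_oneRow hccol
  obtain ⟨⟨hct, htc⟩, -⟩ := oneRow_eq_some.mp ht
  refine ⟨t, ht, lt_of_le_of_ne (not_lt.mp fun hxt => ?_) fun h => htc (h ▸ hc)⟩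
  exact htc (zeroCol_eq_of_reach (hct.reach_of_lt hcx hxt) hct hccol hmax)

theorem oneRow_eq_of_maxCol {x j : Fin n} (hroot : g.parent x = none) (hj : ¬ g.IsRow j)
    (hjx : g.Reach j x) (hmax : ∀ c', ¬ g.IsRow c' → g.Reach c' x → c' ≤ j) :
    g.oneRow j = some x := by
  refine oneRow_eq_some.mpr ⟨⟨hjx, by simp [zeroCol_eq_none hroot]⟩, fun z hz hzj => ?_⟩
  by_contra hxz
  have hzx := hz.reach_of_lt hjx (not_le.mp hxz)
  exact hzj (zeroCol_eq_of_reach hzx hz hj hmax)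

theorem Filled.exists_oneRow_le {i j : Fin n} (h : g.Filled i j) :
    ∃ t, g.oneRow j = some t ∧ t ≤ i := by
  rcases h.2.2.2 with h | ⟨t, ht, hti, -⟩
  · exact ⟨i, h, le_rfl⟩
  · exact ⟨t, ht, hti.le⟩

theorem filled_of_oneRow_eq {j t : Fin n} (hj : ¬ g.IsRow j) (ht : g.oneRow j = some t) :
    g.Filled t j :=
  have hjt := (oneRow_eq_some.mp ht).1.1
  ⟨Or.inr hjt.hasChild, hj, hjt.lt, Or.inl ht⟩

variable (g)

open Classical in
noncomputable def toTableau : PermTableau n where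
  isRow x := decide (g.IsRow x)
  filling i j := decide (g.Filled i j)
  first_row _ := decide_eq_true <| Or.inl <| Option.eq_none_iff_forall_ne_some.mpr fun y hy =>
    Nat.not_lt_zero y (g.parent_lt _ _ hy)
  filling_cells i j h := by
    obtain ⟨hi, hj, hij, -⟩ := of_decide_eq_true h
    exact ⟨decide_eq_true hi, decide_eq_false hj, hij⟩
  col_has_one j hj := by
    obtain ⟨t, ht⟩ := exists_oneRow (of_decide_eq_false hj)
    exact ⟨t, decide_eq_true (filled_of_oneRow_eq (of_decide_eq_false hj) ht)⟩
  no_bad_zero i j hi hj hij := by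
    rintro ⟨i', hi'i, hi'j⟩ ⟨j', hjj', hij'⟩
    obtain ⟨t, ht, hti'⟩ := (of_decide_eq_true hi'j).exists_oneRow_le
    refine decide_eq_true ⟨of_decide_eq_true hi, of_decide_eq_false hj, hij,
      Or.inr ⟨t, ht, hti'.trans_lt hi'i, fun c hc => hjj'.trans ?_⟩⟩
    obtain ⟨-, hj'col, -, hfill⟩ := of_decide_eq_true hij'
    rcases hfill with h | ⟨-, -, -, h⟩
    · obtain ⟨⟨hj'i, hne⟩, -⟩ := oneRow_eq_some.mp h
      exact lt_of_le_of_ne ((zeroCol_eq_some.mp hc).2.2 j' hj'col hj'i) fun h => hne (h ▸ hc)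
    · exact h c hc

variable {g}

@[simp]
theorem isRow_toTableau_eq_true {x : Fin n} : g.toTableau.isRow x = true ↔ g.IsRow x := by
  simp [toTableau]

@[simp]
theorem isRow_toTableau_eq_false {x : Fin n} : g.toTableau.isRow x = false ↔ ¬ g.IsRow x := by
  simp [toTableau]

@[simp]
theorem filling_toTableau_eq_true {i j : Fin n} :
    g.toTableau.filling i j = true ↔ g.Filled i j := by
  simp [toTableau]

@[simp]
theorem filling_toTableau_eq_false {i j : Fin n} :
    g.toTableau.filling i j = false ↔ ¬ g.Filled i j := by
  simp [toTableau]

end ParentMap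

attribute [ext] PermTableau

namespace PermTableau

variable {n : ℕ} (T : PermTableau n)

open Classical in
noncomputable def topRow (j : Fin n) : Option (Fin n) :=
  (Finset.univ.filter (T.filling · j = true)).min

open Classical in
noncomputable def zeroCol (i : Fin n) : Option (Fin n) :=
  (Finset.univ.filter (T.RestrictedZero i ·)).min

open Classical in
noncomputable def dots (c : Fin n) : Finset (Fin n) :=
  Finset.univ.filter (T.Dotted · c)

variable {T}

theorem topRow_eq_some {j t : Fin n} :
    T.topRow j = some t ↔ T.filling t j = true ∧ ∀ i, T.filling i j = true → t ≤ i :=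
  Finset.min_eq_coe_iff.trans (by simp)

theorem topRow_eq_some_iff_topmostOne {j t : Fin n} : T.topRow j = some t ↔ T.TopmostOne t j := by
  rw [topRow_eq_some, TopmostOne]
  refine and_congr_right fun _ => ⟨fun h i hi => ?_, fun h i hi => ?_⟩
  · by_contra hne
    exact absurd (h i (by simpa using hne)) (not_le.mpr hi)
  · by_contra hlt
    simp [h i (not_le.mp hlt)] at hi

theorem exists_topRow {j : Fin n} (hj : T.isRow j = false) : ∃ t, T.topRow j = some t := by
  obtain ⟨i, hi⟩ := T.col_has_one j hj
  exact Finset.min_of_mem (s := Finset.univ.filter (T.filling · j = true)) (a := i) (by simp [hi])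

theorem zeroCol_eq_some {i c : Fin n} : T.zeroCol i = some c ↔ T.RightmostRestrictedZero i c :=
  Finset.min_eq_coe_iff.trans (by simp [RightmostRestrictedZero])

theorem zeroCol_eq_none {i : Fin n} : T.zeroCol i = none ↔ ∀ j, ¬ T.RestrictedZero i j := by
  refine Finset.min_eq_top.trans ?_
  simp [Finset.eq_empty_iff_forall_notMem]

theorem exists_zeroCol {i j : Fin n} (h : T.RestrictedZero i j) : ∃ c, T.zeroCol i = some c :=
  Option.ne_none_iff_exists'.mp fun hnone => zeroCol_eq_none.mp hnone j h

open Classical in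
theorem mem_dots {c i : Fin n} :
    i ∈ T.dots c ↔ T.topRow c = some i ∨ T.zeroCol i = some c := by
  unfold dots
  rw [Finset.mem_filter, topRow_eq_some_iff_topmostOne, zeroCol_eq_some]
  exact and_iff_right (Finset.mem_univ i)

theorem RestrictedZero.filling_eq_false {i c j : Fin n} (h : T.RestrictedZero i c) (hcj : c ≤ j) :
    T.filling i j = false := by
  obtain ⟨⟨hi, hc, hic⟩, hzero, habove⟩ := h
  rcases hcj.lt_or_eq with hcj | rfl
  · by_contra hone
    have := T.no_bad_zero i c hi hc hic habove ⟨j, hcj, by simpa using hone⟩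
    simp [this] at hzero
  · exact hzero

theorem lt_zeroCol_of_topRow {e w c : Fin n} (ht : T.topRow e = some w)
    (hc : T.zeroCol w = some c) : e < c := by
  by_contra hce
  have := ((zeroCol_eq_some.mp hc).1.filling_eq_false (not_lt.mp hce))
  simp [(topRow_eq_some.mp ht).1] at this

/-- A permutation tableau is determined by its rows, topmost `1`'s and rightmost restricted
`0`'s. -/
theorem filling_iff {i j : Fin n} :
    T.filling i j = true ↔ T.isRow i = true ∧ T.isRow j = false ∧ i < j ∧
      (T.topRow j = some i ∨
        ∃ t, T.topRow j = some t ∧ t < i ∧ ∀ c, T.zeroCol i = some c → j < c) := by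
  constructor
  · intro hf
    obtain ⟨hi, hj, hij⟩ := T.filling_cells i j hf
    obtain ⟨t, ht⟩ := exists_topRow hj
    refine ⟨hi, hj, hij, ?_⟩
    rcases ((topRow_eq_some.mp ht).2 i hf).lt_or_eq with hti | rfl
    · refine Or.inr ⟨t, ht, hti, fun c hc => not_le.mp fun hcj => ?_⟩
      simp [(zeroCol_eq_some.mp hc).1.filling_eq_false hcj] at hf
    · exact Or.inl ht
  · rintro ⟨hi, hj, hij, h | ⟨t, ht, hti, hright⟩⟩
    · exact (topRow_eq_some.mp h).1
    · by_contra hf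
      have hrz : T.RestrictedZero i j :=
        ⟨⟨hi, hj, hij⟩, by simpa using hf, t, hti, (topRow_eq_some.mp ht).1⟩
      obtain ⟨c, hc⟩ := exists_zeroCol hrz
      exact absurd ((zeroCol_eq_some.mp hc).2 j hrz) (not_le.mpr (hright c hc))

theorem isCell_of_mem_dots {c i : Fin n} (h : i ∈ T.dots c) : T.IsCell i c := by
  rcases mem_dots.mp h with h | h
  · exact T.filling_cells _ _ (topRow_eq_some.mp h).1
  · exact (zeroCol_eq_some.mp h).1.1

theorem topRow_le_of_mem_dots {c t w : Fin n} (ht : T.topRow c = some t) (hw : w ∈ T.dots c) :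
    t ≤ w := by
  rcases mem_dots.mp hw with h | h
  · exact (Option.some_injective _ (ht.symm.trans h)).le
  · obtain ⟨-, -, i', hi'w, hi'⟩ := (zeroCol_eq_some.mp h).1
    exact ((topRow_eq_some.mp ht).2 i' hi').trans hi'w.le

theorem zeroCol_eq_of_mem_dots {c t z : Fin n} (ht : T.topRow c = some t) (hz : z ∈ T.dots c)
    (hzt : z ≠ t) : T.zeroCol z = some c :=
  (mem_dots.mp hz).resolve_left fun h => hzt (Option.some_injective _ (h.symm.trans ht))

open Classical in
/-- Read from bottom to top, column `c` and its dotted cells form a path towards the root;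
a row without restricted `0` is a root. -/
noncomputable def toParentMap : ParentMap n where
  parent x :=
    bif T.isRow x then (T.zeroCol x).bind fun c => ((T.dots c).filter (· < x)).max
    else (T.dots x).max
  parent_lt x y h := by
    cases hx : T.isRow x <;> rw [hx] at h
    · exact (isCell_of_mem_dots (Finset.mem_of_max h)).2.2
    · obtain ⟨c, -, hy⟩ := Option.bind_eq_some_iff.mp h
      exact (Finset.mem_filter.mp (Finset.mem_of_max hy)).2

theorem parent_toParentMap_of_isRow {x : Fin n} (hx : T.isRow x = true) :
    T.toParentMap.parent x = (T.zeroCol x).bind fun c => ((T.dots c).filter (· < x)).max := by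
  simp only [toParentMap, hx]; rfl

theorem parent_toParentMap_eq_none {x : Fin n} (hx : T.isRow x = true)
    (hc : T.zeroCol x = none) : T.toParentMap.parent x = none := by
  rw [parent_toParentMap_of_isRow hx, hc]
  rfl

theorem parent_toParentMap_of_zeroCol {x c : Fin n} (hc : T.zeroCol x = some c) :
    T.toParentMap.parent x = ((T.dots c).filter (· < x)).max := by
  rw [parent_toParentMap_of_isRow (zeroCol_eq_some.mp hc).1.1.1, hc]
  rfl

theorem parent_toParentMap_of_not_isRow {x : Fin n} (hx : T.isRow x = false) :
    T.toParentMap.parent x = (T.dots x).max := by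
  simp only [toParentMap, hx]; rfl

theorem exists_child_of_mem_dots {c w : Fin n} (hw : w ∈ T.dots c) :
    ∃ z, T.toParentMap.parent z = some w ∧ (z = c ∨ z ∈ T.dots c ∧ w < z) := by
  classical
  obtain ⟨-, hc, -⟩ := isCell_of_mem_dots hw
  by_cases habove : ∃ u ∈ T.dots c, w < u
  · let S := (T.dots c).filter (w < ·)
    have hS : S.Nonempty := by
      obtain ⟨u, hu, hwu⟩ := habove
      exact ⟨u, Finset.mem_filter.mpr ⟨hu, hwu⟩⟩
    obtain ⟨hz, hwz⟩ := Finset.mem_filter.mp (S.min'_mem hS)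
    obtain ⟨t, ht⟩ := exists_topRow hc
    have hzc := zeroCol_eq_of_mem_dots ht hz ((topRow_le_of_mem_dots ht hw).trans_lt hwz).ne'
    refine ⟨S.min' hS, ?_, Or.inr ⟨hz, hwz⟩⟩
    rw [parent_toParentMap_of_zeroCol hzc]
    refine Finset.max_eq_coe_iff.mpr ⟨Finset.mem_filter.mpr ⟨hw, hwz⟩, fun u hu => ?_⟩
    obtain ⟨hu, huz⟩ := Finset.mem_filter.mp hu
    exact not_lt.mp fun hwu => (S.min'_le u (Finset.mem_filter.mpr ⟨hu, hwu⟩)).not_gt huz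
  · refine ⟨c, ?_, Or.inl rfl⟩
    rw [parent_toParentMap_of_not_isRow hc]
    exact Finset.max_eq_coe_iff.mpr
      ⟨hw, fun u hu => not_lt.mp fun hwu => habove ⟨u, hu, hwu⟩⟩

theorem reach_of_mem_dots {c w : Fin n} (hw : w ∈ T.dots c) : T.toParentMap.Reach c w := by
  induction w using WellFoundedGT.induction with
  | _ w ih =>
    obtain ⟨z, hzw, rfl | ⟨hz, hwz⟩⟩ := exists_child_of_mem_dots hw
    · exact ParentMap.reach_of_parent hzw
    · exact (ih z hwz hz).tail hzw

theorem mem_dots_of_parent_of_not_isRow {c y : Fin n} (hc : T.isRow c = false)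
    (h : T.toParentMap.parent c = some y) : y ∈ T.dots c := by
  rw [parent_toParentMap_of_not_isRow hc] at h
  exact Finset.mem_of_max h

theorem exists_mem_dots_of_parent_eq_some {x y : Fin n} (h : T.toParentMap.parent y = some x) :
    ∃ c, x ∈ T.dots c := by
  cases hy : T.isRow y
  · exact ⟨y, mem_dots_of_parent_of_not_isRow hy h⟩
  rcases hc : T.zeroCol y with - | c
  · simp [parent_toParentMap_eq_none hy hc] at h
  rw [parent_toParentMap_of_zeroCol hc] at h
  exact ⟨c, (Finset.mem_filter.mp (Finset.mem_of_max h)).1⟩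

theorem exists_mem_dots_of_parent {e x y : Fin n} (hx : x ∈ T.dots e)
    (hxy : T.toParentMap.parent x = some y) :
    ∃ e', y ∈ T.dots e' ∧ (e' = e ∨ T.topRow e = some x ∧ e < e') := by
  rcases hc : T.zeroCol x with - | c
  · simp [parent_toParentMap_eq_none (isCell_of_mem_dots hx).1 hc] at hxy
  rw [parent_toParentMap_of_zeroCol hc] at hxy
  refine ⟨c, (Finset.mem_filter.mp (Finset.mem_of_max hxy)).1, ?_⟩
  rcases mem_dots.mp hx with h | h
  · exact Or.inr ⟨h, lt_zeroCol_of_topRow h hc⟩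
  · exact Or.inl (Option.some_injective _ (hc.symm.trans h))

theorem exists_mem_dots_of_reach {c x : Fin n} (hc : T.isRow c = false)
    (h : T.toParentMap.Reach c x) : ∃ e, c ≤ e ∧ x ∈ T.dots e := by
  induction h with
  | single h => exact ⟨c, le_rfl, mem_dots_of_parent_of_not_isRow hc h⟩
  | tail _ h ih =>
    obtain ⟨e, hce, hb⟩ := ih
    obtain ⟨e', hy, he'⟩ := exists_mem_dots_of_parent hb h
    exact ⟨e', hce.trans (he'.elim Eq.ge fun h => h.2.le), hy⟩

theorem mem_dots_or_lt_of_reach {j t x : Fin n} (hj : T.isRow j = false)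
    (ht : T.topRow j = some t) (h : T.toParentMap.Reach j x) : x ∈ T.dots j ∨ x < t := by
  induction h with
  | single h => exact Or.inl (mem_dots_of_parent_of_not_isRow hj h)
  | tail _ h ih =>
    rcases ih with hb | hb
    · obtain ⟨e', hy, rfl | ⟨hbt, -⟩⟩ := exists_mem_dots_of_parent hb h
      · exact Or.inl hy
      · obtain rfl := Option.some_injective _ (ht.symm.trans hbt)
        exact Or.inr (T.toParentMap.parent_lt _ _ h)
    · exact Or.inr ((T.toParentMap.parent_lt _ _ h).trans hb)

theorem isRow_toParentMap {x : Fin n} : T.toParentMap.IsRow x ↔ T.isRow x = true := by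
  constructor
  · rintro (hroot | ⟨y, hy⟩)
    · by_contra hx
      obtain ⟨t, ht⟩ := exists_topRow (Bool.not_eq_true _ ▸ hx)
      exact (reach_of_mem_dots (mem_dots.mpr (Or.inl ht))).parent_ne_none hroot
    · obtain ⟨c, hc⟩ := exists_mem_dots_of_parent_eq_some hy
      exact (isCell_of_mem_dots hc).1
  · intro hx
    rcases hc : T.zeroCol x with - | c
    · exact Or.inl (parent_toParentMap_eq_none hx hc)
    · obtain ⟨z, hz, -⟩ := exists_child_of_mem_dots (mem_dots.mpr (Or.inr hc))
      exact Or.inr ⟨z, hz⟩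

theorem le_zeroCol_of_reach {c c' i : Fin n} (hc' : T.isRow c' = false)
    (h : T.toParentMap.Reach c' i) (hc : T.zeroCol i = some c) : c' ≤ c := by
  obtain ⟨e, hc'e, hie⟩ := exists_mem_dots_of_reach hc' h
  refine hc'e.trans ?_
  rcases mem_dots.mp hie with h | h
  · exact (lt_zeroCol_of_topRow h hc).le
  · exact (Option.some_injective _ (h.symm.trans hc)).le

theorem zeroCol_toParentMap_of_zeroCol {i c : Fin n} (hc : T.zeroCol i = some c) :
    T.toParentMap.zeroCol i = some c := by
  obtain ⟨⟨-, hccol, -⟩, -, i', hi'i, hi'c⟩ := (zeroCol_eq_some.mp hc).1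
  obtain ⟨t, ht⟩ := exists_topRow hccol
  have hci := reach_of_mem_dots (mem_dots.mpr (Or.inr hc))
  have hct := reach_of_mem_dots (mem_dots.mpr (Or.inl ht))
  have hti : t < i := ((topRow_eq_some.mp ht).2 i' hi'c).trans_lt hi'i
  refine ParentMap.zeroCol_eq_some.mpr ⟨(hci.reach_of_lt hct hti).parent_ne_none,
    ⟨by simp [isRow_toParentMap, hccol], hci⟩, fun c' hc' h => le_zeroCol_of_reach ?_ h hc⟩
  simpa [isRow_toParentMap] using hc'

theorem zeroCol_toParentMap (i : Fin n) : T.toParentMap.zeroCol i = T.zeroCol i := by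
  rcases hc : T.zeroCol i with - | c
  · rcases hg : T.toParentMap.zeroCol i with - | c
    · rfl
    obtain ⟨hne, ⟨-, hci⟩, -⟩ := ParentMap.zeroCol_eq_some.mp hg
    exact absurd (parent_toParentMap_eq_none (isRow_toParentMap.mp (Or.inr hci.hasChild)) hc) hne
  · exact zeroCol_toParentMap_of_zeroCol hc

theorem oneRow_toParentMap {j : Fin n} (hj : T.isRow j = false) :
    T.toParentMap.oneRow j = T.topRow j := by
  obtain ⟨t, ht⟩ := exists_topRow hj
  rw [ht]
  have htj := mem_dots.mpr (Or.inl ht)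
  refine ParentMap.oneRow_eq_some.mpr ⟨⟨reach_of_mem_dots htj, ?_⟩, fun x hx hxj => ?_⟩
  · rw [zeroCol_toParentMap]
    exact fun h => lt_irrefl j (lt_zeroCol_of_topRow ht h)
  · rw [zeroCol_toParentMap] at hxj
    rcases mem_dots_or_lt_of_reach hj ht hx with hx' | hx'
    · exact not_lt.mp fun htx => hxj (zeroCol_eq_of_mem_dots ht hx' htx.ne')
    · exact hx'.le

theorem filled_toParentMap {i j : Fin n} : T.toParentMap.Filled i j ↔ T.filling i j = true := by
  rw [filling_iff, ParentMap.Filled, isRow_toParentMap, isRow_toParentMap, Bool.not_eq_true]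
  refine and_congr_right fun _ => and_congr_right fun hj => ?_
  rw [oneRow_toParentMap hj, zeroCol_toParentMap]

theorem toTableau_toParentMap : T.toParentMap.toTableau = T := by
  ext x
  · exact Bool.eq_iff_iff.mpr (ParentMap.isRow_toTableau_eq_true.trans isRow_toParentMap)
  · exact Bool.eq_iff_iff.mpr (ParentMap.filling_toTableau_eq_true.trans filled_toParentMap)

end PermTableau

namespace ParentMap

variable {n : ℕ} {g : ParentMap n}

theorem topRow_toTableau {j : Fin n} (hj : ¬ g.IsRow j) : g.toTableau.topRow j = g.oneRow j := by
  obtain ⟨t, ht⟩ := exists_oneRow hj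
  rw [ht, PermTableau.topRow_eq_some]
  refine ⟨filling_toTableau_eq_true.mpr (filled_of_oneRow_eq hj ht), fun i hi => ?_⟩
  obtain ⟨t', ht', hi⟩ := (filling_toTableau_eq_true.mp hi).exists_oneRow_le
  rwa [Option.some_injective _ (ht.symm.trans ht')]

theorem restrictedZero_toTableau {i c : Fin n} (hc : g.zeroCol i = some c) :
    g.toTableau.RestrictedZero i c := by
  obtain ⟨t, ht, hti⟩ := oneRow_lt_of_zeroCol hc
  obtain ⟨-, ⟨hccol, hci⟩, -⟩ := zeroCol_eq_some.mp hc
  refine ⟨⟨isRow_toTableau_eq_true.mpr (Or.inr hci.hasChild),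
    isRow_toTableau_eq_false.mpr hccol, hci.lt⟩, filling_toTableau_eq_false.mpr ?_, t, hti,
    filling_toTableau_eq_true.mpr (filled_of_oneRow_eq hccol ht)⟩
  rintro ⟨-, -, -, h | ⟨-, -, -, h⟩⟩
  · exact hti.ne (Option.some_injective _ (ht.symm.trans h))
  · exact lt_irrefl c (h c hc)

theorem exists_zeroCol_le_of_restrictedZero {i j : Fin n} (h : g.toTableau.RestrictedZero i j) :
    ∃ c, g.zeroCol i = some c ∧ c ≤ j := by
  obtain ⟨⟨hi, hj, hij⟩, hzero, i', hi'i, hi'j⟩ := h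
  obtain ⟨t, ht, hti'⟩ := (filling_toTableau_eq_true.mp hi'j).exists_oneRow_le
  rw [filling_toTableau_eq_false, Filled, not_and, not_and, not_and, not_or] at hzero
  have hleft := (hzero (isRow_toTableau_eq_true.mp hi) (isRow_toTableau_eq_false.mp hj) hij).2
  by_contra hno
  exact hleft ⟨t, ht, hti'.trans_lt hi'i, fun c hc => not_le.mp fun hcj => hno ⟨c, hc, hcj⟩⟩

theorem zeroCol_toTableau (i : Fin n) : g.toTableau.zeroCol i = g.zeroCol i := by
  rcases hc : g.zeroCol i with - | c
  · refine PermTableau.zeroCol_eq_none.mpr fun j h => ?_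
    obtain ⟨c, hc', -⟩ := exists_zeroCol_le_of_restrictedZero h
    simp [hc] at hc'
  · refine PermTableau.zeroCol_eq_some.mpr ⟨restrictedZero_toTableau hc, fun j h => ?_⟩
    obtain ⟨c', hc', hc'j⟩ := exists_zeroCol_le_of_restrictedZero h
    rwa [Option.some_injective _ (hc.symm.trans hc')]

theorem mem_dots_toTableau {c x : Fin n} (hc : ¬ g.IsRow c) :
    x ∈ g.toTableau.dots c ↔ g.Reach c x ∧ ∃ t, g.oneRow c = some t ∧ t ≤ x := by
  rw [PermTableau.mem_dots, topRow_toTableau hc, zeroCol_toTableau]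
  constructor
  · rintro (h | h)
    · exact ⟨(oneRow_eq_some.mp h).1.1, x, h, le_rfl⟩
    · obtain ⟨t, ht, htx⟩ := oneRow_lt_of_zeroCol h
      exact ⟨(zeroCol_eq_some.mp h).2.1.2, t, ht, htx.le⟩
  · rintro ⟨hcx, t, ht, htx⟩
    rcases htx.lt_or_eq with htx | rfl
    · right
      by_contra hne
      exact absurd ((oneRow_eq_some.mp ht).2 x hcx hne) (not_le.mpr htx)
    · exact Or.inl ht

theorem parent_toParentMap_toTableau_of_zeroCol {x c : Fin n} (hc : g.zeroCol x = some c) :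
    g.toTableau.toParentMap.parent x = g.parent x := by
  rw [PermTableau.parent_toParentMap_of_zeroCol (by rw [zeroCol_toTableau, hc])]
  obtain ⟨hne, ⟨hccol, hcx⟩, -⟩ := zeroCol_eq_some.mp hc
  obtain ⟨p, hp⟩ := Option.ne_none_iff_exists'.mp hne
  obtain ⟨t, ht, htx⟩ := oneRow_lt_of_zeroCol hc
  have hct := (oneRow_eq_some.mp ht).1.1
  rw [hp]
  refine Finset.max_eq_coe_iff.mpr ⟨Finset.mem_filter.mpr ⟨(mem_dots_toTableau hccol).mpr
    ⟨hcx.tail hp, t, ht, (hcx.reach_of_lt hct htx).le_of_parent hp⟩, g.parent_lt _ _ hp⟩,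
    fun u hu => ?_⟩
  obtain ⟨hu, hux⟩ := Finset.mem_filter.mp hu
  exact (hcx.reach_of_lt ((mem_dots_toTableau hccol).mp hu).1 hux).le_of_parent hp

theorem parent_toParentMap_toTableau_of_not_isRow {x : Fin n} (hx : ¬ g.IsRow x) :
    g.toTableau.toParentMap.parent x = g.parent x := by
  obtain ⟨p, hp⟩ := Option.ne_none_iff_exists'.mp fun h => hx (Or.inl h)
  rw [PermTableau.parent_toParentMap_of_not_isRow (isRow_toTableau_eq_false.mpr hx), hp]
  obtain ⟨t, ht⟩ := exists_oneRow hx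
  exact Finset.max_eq_coe_iff.mpr ⟨(mem_dots_toTableau hx).mpr ⟨reach_of_parent hp, t, ht,
    (oneRow_eq_some.mp ht).1.1.le_of_parent hp⟩,
    fun u hu => ((mem_dots_toTableau hx).mp hu).1.le_of_parent hp⟩

theorem toParentMap_toTableau (g : ParentMap n) : g.toTableau.toParentMap = g := by
  ext1
  funext x
  by_cases hx : g.IsRow x
  · rcases hc : g.zeroCol x with - | c
    · rw [PermTableau.parent_toParentMap_eq_none (isRow_toTableau_eq_true.mpr hx)
        (by rw [zeroCol_toTableau, hc]), isRow_and_zeroCol_eq_none.mp ⟨hx, hc⟩]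
    · exact parent_toParentMap_toTableau_of_zeroCol hc
  · exact parent_toParentMap_toTableau_of_not_isRow hx

noncomputable def tableauEquiv : ParentMap n ≃ PermTableau n where
  toFun := toTableau
  invFun T := T.toParentMap
  left_inv := toParentMap_toTableau
  right_inv _ := PermTableau.toTableau_toParentMap

theorem exists_oneRow_eq_iff_hasChild {x : Fin n} (hroot : g.parent x = none) :
    (∃ j, ¬ g.IsRow j ∧ g.oneRow j = some x) ↔ g.HasChild x := by
  refine ⟨fun ⟨_, _, hj⟩ => (oneRow_eq_some.mp hj).1.1.hasChild, fun hx => ?_⟩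
  obtain ⟨c, ⟨hc, hcx⟩, hmax⟩ := exists_max_col_reach hx
  exact ⟨c, hc, oneRow_eq_of_maxCol hroot hc hcx hmax⟩

theorem exists_topmostOne_toTableau_iff {x : Fin n} :
    (∃ j, g.toTableau.TopmostOne x j) ↔ ∃ j, ¬ g.IsRow j ∧ g.oneRow j = some x := by
  simp only [← PermTableau.topRow_eq_some_iff_topmostOne]
  constructor
  · rintro ⟨j, hj⟩
    have hjcol := isRow_toTableau_eq_false.mp
      (g.toTableau.filling_cells _ _ (PermTableau.topRow_eq_some.mp hj).1).2.1
    exact ⟨j, hjcol, topRow_toTableau hjcol ▸ hj⟩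
  · rintro ⟨j, hj, hx⟩
    exact ⟨j, (topRow_toTableau hj).trans hx⟩

theorem isEmptyRow_toTableau_iff {x : Fin n} :
    (g.toTableau.isRow x = true ∧ (¬ ∃ j, g.toTableau.TopmostOne x j) ∧
      ¬ ∃ j, g.toTableau.RestrictedZero x j) ↔ g.IsIsolated x := by
  simp only [isRow_toTableau_eq_true, exists_topmostOne_toTableau_iff, not_exists]
  rw [← PermTableau.zeroCol_eq_none, zeroCol_toTableau]
  constructor
  · rintro ⟨hrow, htop, hz⟩
    have hroot := isRow_and_zeroCol_eq_none.mp ⟨hrow, hz⟩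
    exact ⟨hroot, fun hx => ((exists_oneRow_eq_iff_hasChild hroot).mpr hx).elim htop⟩
  · rintro ⟨hroot, hleaf⟩
    exact ⟨Or.inl hroot, fun j hj => hleaf ((exists_oneRow_eq_iff_hasChild hroot).mp ⟨j, hj⟩),
      zeroCol_eq_none hroot⟩

end ParentMap

open ParentMap in
theorem linkedPartitions_singletons_eq_tableaux_emptyRows_general (n k : ℕ) :
    Nat.card {P : Finset (Finset ℕ) // IsLinkedPartition n P ∧
        {x : ℕ | IsSingletonVertex n P x}.ncard = k} =
      Nat.card {T : PermTableau n //
        {i : Fin n | T.isRow i = true ∧ (¬ ∃ j : Fin n, T.TopmostOne i j) ∧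
          ¬ ∃ j : Fin n, T.RestrictedZero i j}.ncard = k} := by
  refine Nat.card_congr <| (Equiv.subtypeSubtypeEquivSubtypeInter _ _).symm.trans <|
    (linkedPartitionEquiv.subtypeEquiv (q := fun g => {x | g.IsIsolated x}.ncard = k)
      fun P => ?_).trans (tableauEquiv.subtypeEquiv fun g => ?_)
  · rw [ncard_isSingletonVertex P.2]
    rfl
  · simp only [tableauEquiv, Equiv.coe_fn_mk, isEmptyRow_toTableau_iff]

/-- The number of linked partitions of `[n]` with exactly `k` singletons
equals the number of permutation tableaux of length `n` having exactly `k`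
rows that contain neither a topmost `1` nor a restricted `0`. -/
theorem linkedPartitions_singletons_eq_tableaux_emptyRows (n k : ℕ)
    (hn : 1 ≤ n) (hk : k ≤ n) :
    Nat.card {P : Finset (Finset ℕ) // IsLinkedPartition n P ∧
        {x : ℕ | IsSingletonVertex n P x}.ncard = k} =
      Nat.card {T : PermTableau n //
        {i : Fin n | T.isRow i = true ∧ (¬ ∃ j : Fin n, T.TopmostOne i j) ∧
          ¬ ∃ j : Fin n, T.RestrictedZero i j}.ncard = k} :=
  linkedPartitions_singletons_eq_tableaux_emptyRows_general n k
end

section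
/- Two permutation tableaux of the same shape that have the same set of positions of topmost 1's and the same set of positions of rightmost restricted 0's are equal; i.e., a permutation tableau is uniquely determined by its shape, its topmost 1's and its rightmost restricted 0's. -/
namespace PermTableau

variable {n : ℕ}

def FillingFromDots (isRow : Fin n → Bool) (top rrz : Fin n → Fin n → Prop) (i j : Fin n) :
    Prop :=
  top i j ∨
    (isRow i = true ∧ isRow j = false ∧ i < j) ∧ (∃ i' < i, top i' j) ∧ ∀ j' ≤ j, ¬ rrz i j'

variable {T : PermTableau n} {i j : Fin n}

theorem exists_topmostOne_le (h : T.filling i j = true) : ∃ t ≤ i, T.TopmostOne t j := by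
  obtain ⟨t, ht, hmin⟩ := wellFounded_lt.has_min {k | T.filling k j = true} ⟨i, h⟩
  refine ⟨t, not_lt.mp (hmin i h), ht, fun k hk => ?_⟩
  simpa using mt (hmin k) (not_not.mpr hk)

theorem exists_rightmostRestrictedZero_le (h : T.RestrictedZero i j) :
    ∃ j₀ ≤ j, T.RightmostRestrictedZero i j₀ := by
  obtain ⟨j₀, hj₀, hmin⟩ := wellFounded_lt.has_min {k | T.RestrictedZero i k} ⟨j, h⟩
  exact ⟨j₀, not_lt.mp (hmin j h), hj₀, fun k hk => not_lt.mp (hmin k hk)⟩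

theorem filling_eq_false_of_restrictedZero_of_lt {j₀ : Fin n} (h : T.RestrictedZero i j₀)
    (hj : j₀ < j) : T.filling i j = false := by
  obtain ⟨⟨hi, hj₀, hij₀⟩, hzero, hone_above⟩ := h
  by_contra hone
  have := T.no_bad_zero i j₀ hi hj₀ hij₀ hone_above ⟨j, hj, Bool.eq_true_of_not_eq_false hone⟩
  simp_all

theorem filling_eq_true_iff :
    T.filling i j = true ↔ FillingFromDots T.isRow T.TopmostOne T.RightmostRestrictedZero i j := by
  constructor
  · intro hone
    by_cases htop : T.TopmostOne i j
    · exact Or.inl htop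
    obtain ⟨i', hi', hone'⟩ : ∃ i' < i, T.filling i' j = true := by
      simpa [TopmostOne, hone] using htop
    obtain ⟨t, hti', ht⟩ := exists_topmostOne_le hone'
    refine Or.inr ⟨T.filling_cells i j hone, ⟨t, hti'.trans_lt hi', ht⟩, fun j₀ hj₀ hrrz => ?_⟩
    rcases hj₀.lt_or_eq with hlt | rfl
    · simp [filling_eq_false_of_restrictedZero_of_lt hrrz.1 hlt] at hone
    · simp [hrrz.1.2.1] at hone
  · rintro (htop | ⟨hcell, ⟨i', hi', htop'⟩, hno_rrz⟩)
    · exact htop.1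
    by_contra hzero
    obtain ⟨j₀, hj₀, hrrz⟩ :=
      exists_rightmostRestrictedZero_le ⟨hcell, by simpa using hzero, i', hi', htop'.1⟩
    exact hno_rrz j₀ hj₀ hrrz

end PermTableau

/-- A permutation tableau is uniquely determined by its shape, its topmost
`1`'s and its rightmost restricted `0`'s. -/
theorem permTableau_determined_by_topmostOnes_and_rrz (n : ℕ)
    (T₁ T₂ : PermTableau n) (hshape : T₁.isRow = T₂.isRow)
    (htop : ∀ i j : Fin n, T₁.TopmostOne i j ↔ T₂.TopmostOne i j)
    (hrrz : ∀ i j : Fin n,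
      T₁.RightmostRestrictedZero i j ↔ T₂.RightmostRestrictedZero i j) :
    T₁ = T₂ := by
  have htop' : T₁.TopmostOne = T₂.TopmostOne := funext₂ fun i j => propext (htop i j)
  have hrrz' : T₁.RightmostRestrictedZero = T₂.RightmostRestrictedZero :=
    funext₂ fun i j => propext (hrrz i j)
  ext1
  · exact hshape
  · funext i j
    rw [Bool.eq_iff_iff, PermTableau.filling_eq_true_iff, PermTableau.filling_eq_true_iff,
      hshape, htop', hrrz']
end
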